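/- arXiv:2410.14068 — 16 statements merged into one kernel-verified Lean document; each statement's English description precedes it below -/
import Mathlib

section
/- Let h, g : ℕ → ℂ with h injective (h_j ≠ h_k whenever j ≠ k). Define c_{n,n} = 1, c_{n,k} = ∏_{j=k}^{n−1} g_{j+1}/(h_n − h_j) for 0 ≤ k ≤ n−1, and ĉ_{n,n} = 1, ĉ_{n,k} = ∏_{j=k+1}^{n} g_j/(h_k − h_j) for 0 ≤ k ≤ n−1. Then for all 0 ≤ k ≤ n, Σ_{j=k}^{n} c_{n,j} ĉ_{j,k} equals 1 if k = n and equals 0 if k < n; that is, the lower triangular matrices C = [c_{n,k}] and Ĉ = [ĉ_{n,k}] are mutually inverse. -/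
open Finset

private lemma telescope_Ico (f : ℕ → ℂ) {m n : ℕ} (hmn : m ≤ n) :
    ∑ i ∈ Finset.Ico m n, (f (i + 1) - f i) = f n - f m := by
  induction n, hmn using Nat.le_induction with
  | base => simp
  | succ n hmn ih =>
      rw [Finset.sum_Ico_succ_top hmn, ih]
      ring

/-- the lower triangular matrices `C = [c_{n,k}]` and `Ĉ = [ĉ_{n,k}]`
are mutually inverse: for `k ≤ n`, `Σ_{j=k}^{n} c_{n,j} ĉ_{j,k}` is `1` when `k = n`
and `0` when `k < n`. -/
theorem coefficient_matrices_mutually_inverse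
    (h g : ℕ → ℂ)
    (hinj : ∀ j k : ℕ, j ≠ k → h j ≠ h k)
    (c : ℕ → ℕ → ℂ)
    (hcnn : ∀ n : ℕ, c n n = 1)
    (hc : ∀ n k : ℕ, k < n → c n k = ∏ j ∈ Finset.Ico k n, g (j + 1) / (h n - h j))
    (chat : ℕ → ℕ → ℂ)
    (hchatnn : ∀ n : ℕ, chat n n = 1)
    (hchat : ∀ n k : ℕ, k < n → chat n k = ∏ j ∈ Finset.Icc (k + 1) n, g j / (h k - h j)) :
    ∀ n k : ℕ, k ≤ n →
      (∑ j ∈ Finset.Icc k n, c n j * chat j k) = if k = n then 1 else 0 := by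
  intro n k hkn
  rcases eq_or_lt_of_le hkn with rfl | hlt
  · simp [hcnn, hchatnn]
  · rw [if_neg (Nat.ne_of_lt hlt)]
    -- notation
    set P : ℕ → ℂ := fun j => ∏ i ∈ Finset.Ico j n, (h n - h i)⁻¹ with hP
    set Q : ℕ → ℂ := fun j => ∏ i ∈ Finset.Ioc k j, (h k - h i)⁻¹ with hQ
    set T : ℕ → ℂ := fun j => P j * Q j with hT
    set F : ℕ → ℂ := fun j => (h k - h j) / (h n - h k) * T j with hF
    have hznk : h n - h k ≠ 0 := sub_ne_zero.mpr (hinj n k (Nat.ne_of_gt hlt))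
    -- rewrite each summand as G * T j
    have hc' : ∀ j, j ≤ n →
        c n j = (∏ i ∈ Finset.Ico j n, g (i + 1)) * P j := by
      intro j hj
      rcases eq_or_lt_of_le hj with rfl | hj'
      · simp [hcnn, hP]
      · rw [hc n j hj', hP, ← Finset.prod_mul_distrib]
        simp [div_eq_mul_inv]
    have hchat' : ∀ j, k ≤ j →
        chat j k = (∏ i ∈ Finset.Ioc k j, g i) * Q j := by
      intro j hj
      rcases eq_or_lt_of_le hj with rfl | hj'
      · simp [hchatnn, hQ]
      · rw [hchat j k hj', hQ, ← Finset.prod_mul_distrib, ← Finset.Icc_add_one_left_eq_Ioc]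
        simp [div_eq_mul_inv]
    have hgshift : ∀ j : ℕ, (∏ i ∈ Finset.Ico j n, g (i + 1))
        = ∏ i ∈ Finset.Ioc j n, g i := by
      intro j
      rw [Finset.prod_Ico_add' g j n 1, ← Finset.Icc_add_one_left_eq_Ioc, Finset.Ico_add_one_right_eq_Icc]
    have key : ∀ j ∈ Finset.Icc k n,
        c n j * chat j k = (∏ i ∈ Finset.Ioc k n, g i) * T j := by
      intro j hj
      rw [Finset.mem_Icc] at hj
      rw [hc' j hj.2, hchat' j hj.1, hgshift j, hT]
      have : (∏ i ∈ Finset.Ioc k j, g i) * ∏ i ∈ Finset.Ioc j n, g i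
          = ∏ i ∈ Finset.Ioc k n, g i := Finset.prod_Ioc_consecutive g hj.1 hj.2
      rw [← this]; ring
    rw [Finset.sum_congr rfl key, ← Finset.mul_sum]
    -- show the sum of T vanishes
    have hstep : ∀ j ∈ Finset.Ico k n, T j = F (j + 1) - F j := by
      intro j hj
      rw [Finset.mem_Ico] at hj
      have hx : h n - h j ≠ 0 := sub_ne_zero.mpr (hinj n j (Nat.ne_of_gt hj.2))
      have hy : h k - h (j + 1) ≠ 0 :=
        sub_ne_zero.mpr (hinj k (j + 1) (by omega))
      have hPstep : P j = (h n - h j)⁻¹ * P (j + 1) := by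
        rw [hP]; exact Finset.prod_eq_prod_Ico_succ_bot hj.2 _
      have hQstep : Q (j + 1) = Q j * (h k - h (j + 1))⁻¹ := by
        rw [hQ]; exact Finset.prod_Ioc_succ_top hj.1 _
      have hkj : h k - h j = (h n - h j) - (h n - h k) := by ring
      simp only [hF, hT]
      rw [hPstep, hQstep, hkj]
      field_simp
      ring
    have htel : ∑ j ∈ Finset.Ico k n, T j = F n - F k := by
      rw [Finset.sum_congr rfl hstep]
      exact telescope_Ico F hlt.le
    have hFk : F k = 0 := by simp [hF]
    have hFn : F n = -T n := by
      simp only [hF]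
      have : (h k - h n) / (h n - h k) = -1 := by
        field_simp
        ring
      rw [this]; ring
    have hsum : ∑ j ∈ Finset.Icc k n, T j = 0 := by
      rw [← Finset.Ico_add_one_right_eq_Icc, Finset.sum_Ico_succ_top hlt.le, htel, hFk, hFn]
      ring
    rw [hsum, mul_zero]
end

section
/- Let a₁, a₂, b₁, b₂, d₁, d₂ ∈ ℂ with a₂ ≠ 0, and set x_k = b₁(−1)^k + b₂ k(−1)^k, h_k = a₁(−1)^k + a₂ k(−1)^k, e_k = −d₁ + d₁(−1)^k + d₂ k(−1)^k, g₀ = 0, g_k = x_{k−1}(h_k − h₀) + e_k for k ≥ 1. Let α_n, β_n be the recurrence coefficients defined from x, h, g. Then: (i) for every even n ≥ 2 with 2a₁ + (2n−1)a₂ ≠ 0, α_n = −n((n−1)a₂ + 2a₁)(n a₂ b₂ + 2a₁ b₂ − a₂ b₁ + d₂)((n−1)a₂ b₂ + a₂ b₁ − d₂) / (a₂((2n−1)a₂ + 2a₁)²); and (ii) for every even n ≥ 0 with 2a₁ + (2n−1)a₂ ≠ 0 and 2a₁ + (2n+1)a₂ ≠ 0, β_n = (a₂(2a₁b₂ + a₂(b₂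 − 2b₁) − 4d₁)n − (2d₁ + d₂)(2a₁ − a₂)) / (((2n−1)a₂ + 2a₁)((2n+1)a₂ + 2a₁)). -/
/-- The recurrence coefficient `β_n` defined from the sequences `x`, `h`, `g`. -/
noncomputable def betaCoeff (x h g : ℕ → ℂ) (n : ℕ) : ℂ :=
  x n + g (n + 1) / (h n - h (n + 1)) - g n / (h (n - 1) - h n)

/-- The recurrence coefficient `α_n` defined from the sequences `x`, `h`, `g`. -/
noncomputable def alphaCoeff (x h g : ℕ → ℂ) (n : ℕ) : ℂ :=
  g n / (h (n - 1) - h n) *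
    (g (n - 1) / (h (n - 2) - h n) - g n / (h (n - 1) - h n)
      + g (n + 1) / (h (n - 1) - h (n + 1)) + x n - x (n - 1))

set_option maxHeartbeats 1600000 in
/-- formulas for `α_n` (even `n ≥ 2`) and `β_n` (even `n ≥ 0`) in the
`q = −1` parametrization with `b₀ = 0`. -/
theorem minus_one_recurrence_coefficients_even
    (a₁ a₂ b₁ b₂ d₁ d₂ : ℂ) (ha : a₂ ≠ 0)
    (x h e g : ℕ → ℂ)
    (hx : ∀ k : ℕ, x k = b₁ * (-1) ^ k + b₂ * k * (-1) ^ k)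
    (hh : ∀ k : ℕ, h k = a₁ * (-1) ^ k + a₂ * k * (-1) ^ k)
    (he : ∀ k : ℕ, e k = -d₁ + d₁ * (-1) ^ k + d₂ * k * (-1) ^ k)
    (hg0 : g 0 = 0)
    (hg : ∀ k : ℕ, 1 ≤ k → g k = x (k - 1) * (h k - h 0) + e k) :
    (∀ n : ℕ, 2 ≤ n → Even n → 2 * a₁ + (2 * (n : ℂ) - 1) * a₂ ≠ 0 →
      alphaCoeff x h g n =
        -((n : ℂ) * (((n : ℂ) - 1) * a₂ + 2 * a₁)
            * ((n : ℂ) * a₂ * b₂ + 2 * a₁ * b₂ - a₂ * b₁ + d₂)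
            * (((n : ℂ) - 1) * a₂ * b₂ + a₂ * b₁ - d₂))
          / (a₂ * ((2 * (n : ℂ) - 1) * a₂ + 2 * a₁) ^ 2)) ∧
    (∀ n : ℕ, Even n → 2 * a₁ + (2 * (n : ℂ) - 1) * a₂ ≠ 0 →
        2 * a₁ + (2 * (n : ℂ) + 1) * a₂ ≠ 0 →
      betaCoeff x h g n =
        (a₂ * (2 * a₁ * b₂ + a₂ * (b₂ - 2 * b₁) - 4 * d₁) * (n : ℂ)
            - (2 * d₁ + d₂) * (2 * a₁ - a₂))
          / (((2 * (n : ℂ) - 1) * a₂ + 2 * a₁) * ((2 * (n : ℂ) + 1) * a₂ + 2 * a₁))) := by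
  have h2a : (2 : ℂ) * a₂ ≠ 0 := mul_ne_zero two_ne_zero ha
  constructor
  · intro n hn2 hev hden
    obtain ⟨m, rfl⟩ : ∃ m, n = 2 * m + 2 := by
      obtain ⟨k, hk⟩ := hev; exact ⟨k - 1, by omega⟩
    have hs : 2 * a₁ + (4 * (m : ℂ) + 3) * a₂ ≠ 0 := by
      intro hc; apply hden; push_cast; linear_combination hc
    have hA : h (2 * m + 1) - h (2 * m + 2) = -(2 * a₁ + (4 * (m : ℂ) + 3) * a₂) := by
      rw [hh, hh]
      simp only [pow_add, pow_mul, neg_one_sq, one_pow, pow_one]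
      push_cast; ring
    have hB : h (2 * m) - h (2 * m + 2) = -(2 * a₂) := by
      rw [hh, hh]
      simp only [pow_add, pow_mul, neg_one_sq, one_pow, pow_one]
      push_cast; ring
    have hC : h (2 * m + 1) - h (2 * m + 3) = 2 * a₂ := by
      rw [hh, hh]
      simp only [pow_add, pow_mul, neg_one_sq, one_pow, pow_one]
      push_cast; ring
    have hGn : g (2 * m + 2) =
        (2 * (m : ℂ) + 2) * (d₂ - a₂ * (b₁ + b₂ * (2 * m + 1))) := by
      rw [hg _ (by omega), show 2 * m + 2 - 1 = 2 * m + 1 from rfl, hx, hh, hh, he]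
      simp only [pow_add, pow_mul, neg_one_sq, one_pow, pow_one, pow_zero]
      push_cast; ring
    have hGm : g (2 * m + 1) =
        -(b₁ + b₂ * (2 * (m : ℂ))) * (2 * a₁ + a₂ * (2 * m + 1))
          - 2 * d₁ - d₂ * (2 * (m : ℂ) + 1) := by
      rw [hg _ (by omega), show 2 * m + 1 - 1 = 2 * m from rfl, hx, hh, hh, he]
      simp only [pow_add, pow_mul, neg_one_sq, one_pow, pow_one, pow_zero]
      push_cast; ring
    have hGp : g (2 * m + 3) =
        -(b₁ + b₂ * (2 * (m : ℂ) + 2)) * (2 * a₁ + a₂ * (2 * m + 3))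
          - 2 * d₁ - d₂ * (2 * (m : ℂ) + 3) := by
      rw [hg _ (by omega), show 2 * m + 3 - 1 = 2 * m + 2 from rfl, hx, hh, hh, he]
      simp only [pow_add, pow_mul, neg_one_sq, one_pow, pow_one, pow_zero]
      push_cast; ring
    have hxn : x (2 * m + 2) = b₁ + b₂ * (2 * (m : ℂ) + 2) := by
      rw [hx]
      simp only [pow_add, pow_mul, neg_one_sq, one_pow, pow_one]
      push_cast; ring
    have hxm : x (2 * m + 1) = -(b₁ + b₂ * (2 * (m : ℂ) + 1)) := by
      rw [hx]
      simp only [pow_add, pow_mul, neg_one_sq, one_pow, pow_one]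
      push_cast; ring
    rw [alphaCoeff, show 2 * m + 2 - 1 = 2 * m + 1 from rfl,
      show 2 * m + 2 - 2 = 2 * m from rfl, show 2 * m + 2 + 1 = 2 * m + 3 from rfl,
      hA, hB, hC, hGn, hGm, hGp, hxn, hxm]
    push_cast
    rw [show (2 * (2 * (m : ℂ) + 2) - 1) * a₂ + 2 * a₁ = 2 * a₁ + (4 * (m : ℂ) + 3) * a₂ from by ring]
    simp only [div_neg]
    field_simp [hs, ha, show 2 * a₁ + a₂ * ((m : ℂ) * 4 + 3) ≠ 0 by intro hc; apply hs; linear_combination hc]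
    ring
  · intro n hev hd1 hd2
    rcases Nat.eq_zero_or_pos n with rfl | hpos
    · have hd1' : (2 : ℂ) * a₁ - a₂ ≠ 0 := by
        intro hc; apply hd1; push_cast; linear_combination hc
      have hd2' : (2 : ℂ) * a₁ + a₂ ≠ 0 := by
        intro hc; apply hd2; push_cast; linear_combination hc
      have hG1 : g 1 = b₁ * (-(2 * a₁ + a₂)) + (-2 * d₁ - d₂) := by
        rw [hg _ (by omega), show 1 - 1 = 0 from rfl, hx, hh, hh, he]
        push_cast; ring
      have hD0 : h 0 - h 1 = 2 * a₁ + a₂ := by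
        rw [hh, hh]; push_cast; ring
      have hx0 : x 0 = b₁ := by rw [hx]; push_cast; ring
      rw [betaCoeff, show (0 : ℕ) - 1 = 0 from rfl, hg0, zero_div, sub_zero,
        show (0 : ℕ) + 1 = 1 from rfl, hG1, hx0, hD0]
      push_cast
      rw [show (2 * (0 : ℂ) - 1) * a₂ + 2 * a₁ = 2 * a₁ - a₂ from by ring,
        show (2 * (0 : ℂ) + 1) * a₂ + 2 * a₁ = 2 * a₁ + a₂ from by ring]
      field_simp [hd1', hd2']
      ring
    · obtain ⟨m, rfl⟩ : ∃ m, n = 2 * m + 2 := by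
        obtain ⟨k, hk⟩ := hev; exact ⟨k - 1, by omega⟩
      have hs : 2 * a₁ + (4 * (m : ℂ) + 3) * a₂ ≠ 0 := by
        intro hc; apply hd1; push_cast; linear_combination hc
      have hs' : 2 * a₁ + (4 * (m : ℂ) + 5) * a₂ ≠ 0 := by
        intro hc; apply hd2; push_cast; linear_combination hc
      have hA : h (2 * m + 1) - h (2 * m + 2) = -(2 * a₁ + (4 * (m : ℂ) + 3) * a₂) := by
        rw [hh, hh]
        simp only [pow_add, pow_mul, neg_one_sq, one_pow, pow_one]
        push_cast; ring
      have hD : h (2 * m + 2) - h (2 * m + 3) = 2 * a₁ + (4 * (m : ℂ) + 5) * a₂ := by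
        rw [hh, hh]
        simp only [pow_add, pow_mul, neg_one_sq, one_pow, pow_one]
        push_cast; ring
      have hGn : g (2 * m + 2) =
          (2 * (m : ℂ) + 2) * (d₂ - a₂ * (b₁ + b₂ * (2 * m + 1))) := by
        rw [hg _ (by omega), show 2 * m + 2 - 1 = 2 * m + 1 from rfl, hx, hh, hh, he]
        simp only [pow_add, pow_mul, neg_one_sq, one_pow, pow_one, pow_zero]
        push_cast; ring
      have hGp : g (2 * m + 3) =
          -(b₁ + b₂ * (2 * (m : ℂ) + 2)) * (2 * a₁ + a₂ * (2 * m + 3))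
            - 2 * d₁ - d₂ * (2 * (m : ℂ) + 3) := by
        rw [hg _ (by omega), show 2 * m + 3 - 1 = 2 * m + 2 from rfl, hx, hh, hh, he]
        simp only [pow_add, pow_mul, neg_one_sq, one_pow, pow_one, pow_zero]
        push_cast; ring
      have hxn : x (2 * m + 2) = b₁ + b₂ * (2 * (m : ℂ) + 2) := by
        rw [hx]
        simp only [pow_add, pow_mul, neg_one_sq, one_pow, pow_one]
        push_cast; ring
      rw [betaCoeff, show 2 * m + 2 - 1 = 2 * m + 1 from rfl,
        show 2 * m + 2 + 1 = 2 * m + 3 from rfl, hA, hD, hGn, hGp, hxn]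
      push_cast
      rw [show (2 * (2 * (m : ℂ) + 2) - 1) * a₂ + 2 * a₁ = 2 * a₁ + (4 * (m : ℂ) + 3) * a₂ from by ring,
        show (2 * (2 * (m : ℂ) + 2) + 1) * a₂ + 2 * a₁ = 2 * a₁ + (4 * (m : ℂ) + 5) * a₂ from by ring]
      simp only [div_neg]
      field_simp [hs, hs', ha, show 2 * a₁ + a₂ * ((m : ℂ) * 4 + 3) ≠ 0 by intro hc; apply hs; linear_combination hc, show 2 * a₁ + a₂ * ((m : ℂ) * 4 + 5) ≠ 0 by intro hc; apply hs'; linear_combination hc]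
      ring
end

section
/- Let a₁, a₂, b₁, b₂, d₁, d₂ ∈ ℂ with a₂ ≠ 0, and set x_k = b₁(−1)^k + b₂ k(−1)^k, h_k = a₁(−1)^k + a₂ k(−1)^k, e_k = −d₁ + d₁(−1)^k + d₂ k(−1)^k, g₀ = 0, g_k = x_{k−1}(h_k − h₀) + e_k for k ≥ 1. Let α_n be the recurrence coefficient defined from x, h, g. Then for every odd n ≥ 1 with 2a₁ + (2n−1)a₂ ≠ 0, α_n = −w₁(n)·w₂(n) / (a₂((2n−1)a₂ + 2a₁)²), where w₁(n) = a₂b₂ n² + ((b₁ − b₂)a₂ + 2a₁b₂ + d₂) n + 2(b₁ − b₂)a₁ + 2d₁ and w₂(n) = a₂²b₂ n² + (−(b₁ + b₂)a₂² + (2a₁b₂ − d₂)a₂) n + a₂²b₁ + (2d₁ + d₂ − 2a₁b₂)a₂ − 2a₁d₂. -/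
private lemma aux_frac (P Q R X2 X1 N a D : ℂ) (ha2 : a ≠ 0) (hD : D ≠ 0)
    (hkey : P * (Q*D - P*(2*a) - R*D + (X2 - X1)*((2*a)*D)) * (a*D^2)
      = N * (D*((2*a)*D))) :
    P/D * (Q/(2*a) - P/D + R/(-(2*a)) + X2 - X1) = N/(a*D^2) := by
  have h2 : (2:ℂ)*a ≠ 0 := by simpa using ha2
  have hE : (2*a)*D ≠ 0 := mul_ne_zero h2 hD
  have hE2 : (2*a)*D*(2*a) ≠ 0 := mul_ne_zero hE h2
  have hAD : a*D^2 ≠ 0 := mul_ne_zero ha2 (pow_ne_zero _ hD)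
  rw [div_sub_div _ _ h2 hD, div_neg, ← sub_eq_add_neg, div_sub_div _ _ hE h2,
    div_add' _ _ _ hE2, div_sub' hE2, div_mul_div_comm,
    div_eq_div_iff (mul_ne_zero hD hE2) hAD]
  linear_combination 2*a*hkey

/-- formula for `α_n` for odd `n ≥ 1` in the `q = −1` parametrization
with `b₀ = 0`. -/
theorem minus_one_recurrence_coefficient_alpha_odd
    (a₁ a₂ b₁ b₂ d₁ d₂ : ℂ) (ha : a₂ ≠ 0)
    (x h e g : ℕ → ℂ)
    (hx : ∀ k : ℕ, x k = b₁ * (-1) ^ k + b₂ * k * (-1) ^ k)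
    (hh : ∀ k : ℕ, h k = a₁ * (-1) ^ k + a₂ * k * (-1) ^ k)
    (he : ∀ k : ℕ, e k = -d₁ + d₁ * (-1) ^ k + d₂ * k * (-1) ^ k)
    (hg0 : g 0 = 0)
    (hg : ∀ k : ℕ, 1 ≤ k → g k = x (k - 1) * (h k - h 0) + e k) :
    ∀ n : ℕ, 1 ≤ n → Odd n → 2 * a₁ + (2 * (n : ℂ) - 1) * a₂ ≠ 0 →
      alphaCoeff x h g n =
        -((a₂ * b₂ * (n : ℂ) ^ 2 + ((b₁ - b₂) * a₂ + 2 * a₁ * b₂ + d₂) * (n : ℂ)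
              + 2 * (b₁ - b₂) * a₁ + 2 * d₁)
          * (a₂ ^ 2 * b₂ * (n : ℂ) ^ 2 + (-(b₁ + b₂) * a₂ ^ 2 + (2 * a₁ * b₂ - d₂) * a₂) * (n : ℂ)
              + a₂ ^ 2 * b₁ + (2 * d₁ + d₂ - 2 * a₁ * b₂) * a₂ - 2 * a₁ * d₂))
        / (a₂ * ((2 * (n : ℂ) - 1) * a₂ + 2 * a₁) ^ 2) := by
  intro n hn hodd hne
  obtain ⟨m, rfl⟩ := hodd
  rcases m with _ | k
  · -- n = 1
    have hne' : 2 * a₁ + a₂ ≠ 0 := fun H => hne (by push_cast; linear_combination H)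
    simp only [alphaCoeff]
    norm_num
    rw [hg 2 one_le_two, hg 1 le_rfl]
    norm_num
    rw [hg0]
    norm_num
    rw [hx 1, hx 0, hh 2, hh 1, hh 0, he 1, he 2]
    norm_num
    have hd3 : a₁ - (-a₁ + -a₂) ≠ 0 := fun H => hne' (by linear_combination H)
    have hd4 : a₂ + 2*a₁ ≠ 0 := fun H => hne' (by linear_combination H)
    have hd5 : a₂ + a₁ * 2 ≠ 0 := fun H => hne' (by linear_combination H)
    field_simp [ha, hd3, hd4]
    ring
  · -- n = 2k+3
    simp only [show 2*(k+1)+1 = 2*k+3 from by ring] at hne ⊢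
    push_cast at hne ⊢
    have hne' : 2*a₁+(4*(k:ℂ)+5)*a₂ ≠ 0 := fun H => hne (by linear_combination H)
    have p1 : ((-1:ℂ)) ^ (2*k+1) = -1 := Odd.neg_one_pow ⟨k, by ring⟩
    have p2 : ((-1:ℂ)) ^ (2*k+2) = 1 := Even.neg_one_pow ⟨k+1, by ring⟩
    have p3 : ((-1:ℂ)) ^ (2*k+3) = -1 := Odd.neg_one_pow ⟨k+1, by ring⟩
    have p4 : ((-1:ℂ)) ^ (2*k+4) = 1 := Even.neg_one_pow ⟨k+2, by ring⟩
    have i1 : 2*k+3-1 = 2*k+2 := rfl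
    have i2 : 2*k+4-1 = 2*k+3 := rfl
    have i3 : 2*k+2-1 = 2*k+1 := rfl
    have i4 : 2*k+3-2 = 2*k+1 := rfl
    have Hh0 : h 0 = a₁ := by rw [hh]; norm_num
    have Hh1 : h (2*k+1) = -(a₁ + (2*(k:ℂ)+1)*a₂) := by rw [hh, p1]; push_cast; ring
    have Hh2 : h (2*k+2) = a₁ + (2*(k:ℂ)+2)*a₂ := by rw [hh, p2]; push_cast; ring
    have Hh3 : h (2*k+3) = -(a₁ + (2*(k:ℂ)+3)*a₂) := by rw [hh, p3]; push_cast; ring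
    have Hh4 : h (2*k+4) = a₁ + (2*(k:ℂ)+4)*a₂ := by rw [hh, p4]; push_cast; ring
    have Hx2 : x (2*k+2) = b₁ + (2*(k:ℂ)+2)*b₂ := by rw [hx, p2]; push_cast; ring
    have Hx3 : x (2*k+3) = -(b₁ + (2*(k:ℂ)+3)*b₂) := by rw [hx, p3]; push_cast; ring
    have Hg3 : g (2*k+3)
        = -((b₁ + (2*(k:ℂ)+2)*b₂) * (2*a₁ + (2*(k:ℂ)+3)*a₂) + 2*d₁ + (2*(k:ℂ)+3)*d₂) := by
      rw [hg _ (by omega), i1, Hx2, Hh3, Hh0, he, p3]; push_cast; ring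
    have Hg2 : g (2*k+2) = (2*(k:ℂ)+2) * (d₂ - (b₁ + (2*(k:ℂ)+1)*b₂)*a₂) := by
      rw [hg _ (by omega), i3, hx, Hh2, Hh0, he, p1, p2]; push_cast; ring
    have Hg4 : g (2*k+4) = (2*(k:ℂ)+4) * (d₂ - (b₁ + (2*(k:ℂ)+3)*b₂)*a₂) := by
      rw [hg _ (by omega), i2, Hx3, Hh4, Hh0, he, p4]; push_cast; ring
    simp only [alphaCoeff, i1, i4, show 2*k+3+1 = 2*k+4 from rfl]
    rw [Hg3, Hg2, Hg4, Hh1, Hh2, Hh3, Hh4, Hx2, Hx3]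
    rw [show a₁ + (2*(k:ℂ)+2)*a₂ - -(a₁ + (2*(k:ℂ)+3)*a₂) = 2*a₁+(4*(k:ℂ)+5)*a₂ from by ring,
      show -(a₁ + (2*(k:ℂ)+1)*a₂) - -(a₁ + (2*(k:ℂ)+3)*a₂) = 2*a₂ from by ring,
      show a₁ + (2*(k:ℂ)+2)*a₂ - (a₁ + (2*(k:ℂ)+4)*a₂) = -(2*a₂) from by ring,
      show (2 * (2*(k:ℂ)+3) - 1) * a₂ + 2 * a₁ = 2*a₁+(4*(k:ℂ)+5)*a₂ from by ring]
    exact aux_frac _ _ _ _ _ _ _ _ ha hne' (by push_cast; ring)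
end

section
/- Let r, s, t₁, t₂, b₂, a₂ ∈ ℂ with a₂ ≠ 0, and set a₁ = (s + 1/2)a₂, b₁ = (r + 1/2)b₂, d₁ = (t₁/2 + 1/4)a₂b₂, d₂ = (t₂ − 1/2)a₂b₂, and x_k = b₁(−1)^k + b₂ k(−1)^k, h_k = a₁(−1)^k + a₂ k(−1)^k, e_k = −d₁ + d₁(−1)^k + d₂ k(−1)^k, g₀ = 0, g_k = x_{k−1}(h_k − h₀) + e_k for k ≥ 1. Let α_n, β_n be the recurrence coefficients defined from x, h, g. Then: (i) for every even n ≥ 2 with n + s ≠ 0, α_n = −b₂² n (n + 2s)(n + 2s − r + t₂)(n + r − t₂) / (4(n + s)²); and (ii) for every even n ≥ 0 with n + s ≠ 0 and n + 1 + s ≠ 0, β_n = −b₂((r − s + t₁)n + s(t₁ + t₂)) / (2(n + s)(n + 1 + s)). -/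
private lemma alpha_helper (N A B C D u : ℂ) (hu : u ≠ 0) :
    N/(2*u) * (A - N/(2*u) + B + C - D)
      = (N * ((A+B+C-D)*(2*u) - N))/(4*u^2) := by
  field_simp
  ring

private lemma beta_helper (X N4 N1 u v : ℂ) (hu : u ≠ 0) (hv : v ≠ 0) :
    X + N4/(2*v) - N1/(2*u) = (2*X*u*v + N4*u - N1*v)/(2*u*v) := by
  field_simp

set_option maxHeartbeats 2000000 in
/-- formulas for `α_n` and `β_n` for even `n` in the four-parameter
`(r, s, t₁, t₂)` reparametrization of the `q = −1` class. -/
theorem minus_one_rst_parametrization_even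
    (r s t₁ t₂ b₂ a₂ : ℂ) (ha : a₂ ≠ 0)
    (a₁ b₁ d₁ d₂ : ℂ)
    (ha₁ : a₁ = (s + 1 / 2) * a₂) (hb₁ : b₁ = (r + 1 / 2) * b₂)
    (hd₁ : d₁ = (t₁ / 2 + 1 / 4) * a₂ * b₂) (hd₂ : d₂ = (t₂ - 1 / 2) * a₂ * b₂)
    (x h e g : ℕ → ℂ)
    (hx : ∀ k : ℕ, x k = b₁ * (-1) ^ k + b₂ * k * (-1) ^ k)
    (hh : ∀ k : ℕ, h k = a₁ * (-1) ^ k + a₂ * k * (-1) ^ k)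
    (he : ∀ k : ℕ, e k = -d₁ + d₁ * (-1) ^ k + d₂ * k * (-1) ^ k)
    (hg0 : g 0 = 0)
    (hg : ∀ k : ℕ, 1 ≤ k → g k = x (k - 1) * (h k - h 0) + e k) :
    (∀ n : ℕ, 2 ≤ n → Even n → (n : ℂ) + s ≠ 0 →
      alphaCoeff x h g n =
        -(b₂ ^ 2 * (n : ℂ) * ((n : ℂ) + 2 * s) * ((n : ℂ) + 2 * s - r + t₂)
            * ((n : ℂ) + r - t₂))
          / (4 * ((n : ℂ) + s) ^ 2)) ∧
    (∀ n : ℕ, Even n → (n : ℂ) + s ≠ 0 → (n : ℂ) + 1 + s ≠ 0 →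
      betaCoeff x h g n =
        -(b₂ * ((r - s + t₁) * (n : ℂ) + s * (t₁ + t₂)))
          / (2 * ((n : ℂ) + s) * ((n : ℂ) + 1 + s))) := by
  have hE : ∀ m : ℕ, Even m → h m = a₁ + a₂ * m := by
    intro m hm; rw [hh, hm.neg_one_pow]; ring
  have hO : ∀ m : ℕ, Odd m → h m = -(a₁ + a₂ * m) := by
    intro m hm; rw [hh, hm.neg_one_pow]; ring
  have xE : ∀ m : ℕ, Even m → x m = b₁ + b₂ * m := by
    intro m hm; rw [hx, hm.neg_one_pow]; ring
  have xO : ∀ m : ℕ, Odd m → x m = -(b₁ + b₂ * m) := by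
    intro m hm; rw [hx, hm.neg_one_pow]; ring
  have gE : ∀ m : ℕ, Even m → g m = -(a₂ * m) * (b₁ + b₂ * ((m:ℂ) - 1)) + d₂ * m := by
    intro m hm
    rcases Nat.eq_zero_or_pos m with h0 | h1
    · subst h0; simp [hg0]
    · rw [hg m h1, xO (m-1) (Nat.Even.sub_odd h1 hm odd_one),
        hE m hm, hE 0 Even.zero, he, hm.neg_one_pow]
      push_cast [Nat.cast_sub h1]
      ring
  have gO : ∀ m : ℕ, Odd m → g m = (b₁ + b₂ * ((m:ℂ) - 1)) * (-(2*a₁ + a₂ * m)) - 2*d₁ - d₂ * m := by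
    intro m hm
    have h1 : 1 ≤ m := hm.pos
    rw [hg m h1, xE (m-1) (by obtain ⟨k, rfl⟩ := hm; exact ⟨k, by omega⟩),
      hO m hm, hE 0 Even.zero, he, hm.neg_one_pow]
    push_cast [Nat.cast_sub h1]
    ring
  subst ha₁ hb₁ hd₁ hd₂
  constructor
  · intro n hn2 hne hns
    have h1 : 1 ≤ n := by omega
    have hon1 : Odd (n-1) := Nat.Even.sub_odd h1 hne odd_one
    have hon1' : Odd (n+1) := hne.add_one
    have hen2 : Even (n-2) := by obtain ⟨k, rfl⟩ := hne; exact ⟨k-1, by omega⟩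
    have c1 : ((n-1 : ℕ) : ℂ) = (n:ℂ) - 1 := by push_cast [Nat.cast_sub h1]; ring
    have c2 : ((n-2 : ℕ) : ℂ) = (n:ℂ) - 2 := by push_cast [Nat.cast_sub hn2]; ring
    have hd1 : -(2*a₂*((n:ℂ)+s)) ≠ 0 :=
      neg_ne_zero.mpr (mul_ne_zero (mul_ne_zero two_ne_zero ha) hns)
    have hd2 : -(2*a₂) ≠ 0 := neg_ne_zero.mpr (mul_ne_zero two_ne_zero ha)
    have hd3 : (2:ℂ)*a₂ ≠ 0 := mul_ne_zero two_ne_zero ha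
    have q1 : g n / (h (n-1) - h n) = b₂*(n:ℂ)*((n:ℂ)+r-t₂)/(2*((n:ℂ)+s)) := by
      rw [show h (n-1) - h n = -(2*a₂*((n:ℂ)+s)) from by
          rw [hO _ hon1, hE _ hne, c1]; ring,
        gE n hne, div_eq_div_iff hd1 (mul_ne_zero two_ne_zero hns)]
      ring
    have q2 : g (n-1) / (h (n-2) - h n)
        = b₂/2*(((n:ℂ)+r-3/2)*((n:ℂ)+2*s) + (t₁+1/2) + (t₂-1/2)*((n:ℂ)-1)) := by
      rw [show h (n-2) - h n = -(2*a₂) from by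
          rw [hE _ hen2, hE _ hne, c2]; ring,
        gO (n-1) hon1, c1, div_eq_iff hd2]
      ring
    have q3 : g (n+1) / (h (n-1) - h (n+1))
        = -(b₂/2*(((n:ℂ)+r+1/2)*((n:ℂ)+2*s+2) + (t₁+1/2) + (t₂-1/2)*((n:ℂ)+1))) := by
      rw [show h (n-1) - h (n+1) = 2*a₂ from by
          rw [hO _ hon1, hO _ hon1', c1]; push_cast; ring,
        gO (n+1) hon1', div_eq_iff hd3]
      push_cast
      ring
    have hu4 : (4:ℂ)*((n:ℂ)+s)^2 ≠ 0 := mul_ne_zero (by norm_num) (pow_ne_zero 2 hns)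
    unfold alphaCoeff
    rw [q1, q2, q3, xE n hne, xO (n-1) hon1, c1, alpha_helper _ _ _ _ _ _ hns,
      div_eq_div_iff hu4 hu4]
    ring
  · intro n hne hns hns1
    have q1 : g n / (h (n-1) - h n) = b₂*(n:ℂ)*((n:ℂ)+r-t₂)/(2*((n:ℂ)+s)) := by
      rcases Nat.eq_zero_or_pos n with h0 | h1
      · subst h0; simp [hg0]
      · have hon1 : Odd (n-1) := Nat.Even.sub_odd h1 hne odd_one
        have c1 : ((n-1 : ℕ) : ℂ) = (n:ℂ) - 1 := by push_cast [Nat.cast_sub h1]; ring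
        rw [show h (n-1) - h n = -(2*a₂*((n:ℂ)+s)) from by
            rw [hO _ hon1, hE _ hne, c1]; ring,
          gE n hne,
          div_eq_div_iff (neg_ne_zero.mpr (mul_ne_zero (mul_ne_zero two_ne_zero ha) hns))
            (mul_ne_zero two_ne_zero hns)]
        ring
    have hon1' : Odd (n+1) := hne.add_one
    have q4 : g (n+1) / (h n - h (n+1))
        = -(b₂*(((n:ℂ)+r+1/2)*((n:ℂ)+2*s+2) + (t₁+1/2) + (t₂-1/2)*((n:ℂ)+1)))/(2*((n:ℂ)+1+s)) := by
      rw [show h n - h (n+1) = 2*a₂*((n:ℂ)+1+s) from by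
          rw [hE _ hne, hO _ hon1']; push_cast; ring,
        gO (n+1) hon1',
        div_eq_div_iff (mul_ne_zero (mul_ne_zero two_ne_zero ha) hns1)
          (mul_ne_zero two_ne_zero hns1)]
      push_cast
      ring
    have hden : (2:ℂ)*((n:ℂ)+s)*((n:ℂ)+1+s) ≠ 0 :=
      mul_ne_zero (mul_ne_zero two_ne_zero hns) hns1
    unfold betaCoeff
    rw [xE n hne, q1, q4, beta_helper _ _ _ _ _ hns hns1,
      div_eq_div_iff (by exact mul_ne_zero (mul_ne_zero two_ne_zero hns) hns1) hden]
    ring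
end

section
/- Let r, s, t₁, t₂, b₂, a₂ ∈ ℂ with a₂ ≠ 0, and set a₁ = (s + 1/2)a₂, b₁ = (r + 1/2)b₂, d₁ = (t₁/2 + 1/4)a₂b₂, d₂ = (t₂ − 1/2)a₂b₂, and x_k = b₁(−1)^k + b₂ k(−1)^k, h_k = a₁(−1)^k + a₂ k(−1)^k, e_k = −d₁ + d₁(−1)^k + d₂ k(−1)^k, g₀ = 0, g_k = x_{k−1}(h_k − h₀) + e_k for k ≥ 1. Let α_n, β_n be the recurrence coefficients defined from x, h, g. Then: (i) for every odd n ≥ 1 with n + s ≠ 0, α_n = −(b₂²/(4(n + s)²))·(n² + (r + 2s + t₂)n + (2r − 1)s + r + t₁)·(n² + (2s − r − t₂)n − (2t₂ + 1)s + r + t₁); and (ii) for every odd n ≥ 1 with n + s ≠ 0 and n + 1 + s ≠ 0, β_n = b₂((r − s + t₁)n − 2s² + (2r + t₁ − t₂ − 1)s + r + t₁) / (2(n + s)(n + 1 + s)). -/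
set_option maxHeartbeats 2000000 in
/-- formulas for `α_n` and `β_n` for odd `n` in the four-parameter
`(r, s, t₁, t₂)` reparametrization of the `q = −1` class. -/
theorem minus_one_rst_parametrization_odd
    (r s t₁ t₂ b₂ a₂ : ℂ) (ha : a₂ ≠ 0)
    (a₁ b₁ d₁ d₂ : ℂ)
    (ha₁ : a₁ = (s + 1 / 2) * a₂) (hb₁ : b₁ = (r + 1 / 2) * b₂)
    (hd₁ : d₁ = (t₁ / 2 + 1 / 4) * a₂ * b₂) (hd₂ : d₂ = (t₂ - 1 / 2) * a₂ * b₂)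
    (x h e g : ℕ → ℂ)
    (hx : ∀ k : ℕ, x k = b₁ * (-1) ^ k + b₂ * k * (-1) ^ k)
    (hh : ∀ k : ℕ, h k = a₁ * (-1) ^ k + a₂ * k * (-1) ^ k)
    (he : ∀ k : ℕ, e k = -d₁ + d₁ * (-1) ^ k + d₂ * k * (-1) ^ k)
    (hg0 : g 0 = 0)
    (hg : ∀ k : ℕ, 1 ≤ k → g k = x (k - 1) * (h k - h 0) + e k) :
    (∀ n : ℕ, 1 ≤ n → Odd n → (n : ℂ) + s ≠ 0 →
      alphaCoeff x h g n =
        -(b₂ ^ 2 / (4 * ((n : ℂ) + s) ^ 2))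
          * ((n : ℂ) ^ 2 + (r + 2 * s + t₂) * (n : ℂ) + (2 * r - 1) * s + r + t₁)
          * ((n : ℂ) ^ 2 + (2 * s - r - t₂) * (n : ℂ) - (2 * t₂ + 1) * s + r + t₁)) ∧
    (∀ n : ℕ, 1 ≤ n → Odd n → (n : ℂ) + s ≠ 0 → (n : ℂ) + 1 + s ≠ 0 →
      betaCoeff x h g n =
        b₂ * ((r - s + t₁) * (n : ℂ) - 2 * s ^ 2 + (2 * r + t₁ - t₂ - 1) * s + r + t₁)
          / (2 * ((n : ℂ) + s) * ((n : ℂ) + 1 + s))) := by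
  subst ha₁ hb₁ hd₁ hd₂
  have hpe : ∀ k : ℕ, ((-1 : ℂ)) ^ (2 * k) = 1 := fun k => by
    rw [pow_mul]; norm_num
  have hpo : ∀ k : ℕ, ((-1 : ℂ)) ^ (2 * k + 1) = -1 := fun k => by
    rw [pow_succ, hpe]; ring
  have hh0 : h 0 = (s + 1 / 2) * a₂ := by rw [hh]; norm_num
  constructor
  · intro n hn hodd hns
    obtain ⟨m, rfl⟩ := hodd
    push_cast at hns
    -- values
    have hg1 : g (2 * m + 1) =
        ((r + 1 / 2) * b₂ + b₂ * (2 * (m : ℂ)))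
          * ((-(s + 1 / 2) * a₂ - a₂ * (2 * (m : ℂ) + 1)) - (s + 1 / 2) * a₂)
        + (-2 * ((t₁ / 2 + 1 / 4) * a₂ * b₂)
            - (t₂ - 1 / 2) * a₂ * b₂ * (2 * (m : ℂ) + 1)) := by
      rw [hg _ (by omega)]
      simp only [Nat.add_sub_cancel]
      rw [hx, hh, hh0, he]; simp only [hpe, hpo]
      push_cast; ring
    have hg2 : g (2 * m + 1 + 1) =
        (-(r + 1 / 2) * b₂ - b₂ * (2 * (m : ℂ) + 1)) * (a₂ * (2 * (m : ℂ) + 2))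
        + (t₂ - 1 / 2) * a₂ * b₂ * (2 * (m : ℂ) + 2) := by
      have h2 : 2 * m + 1 + 1 = 2 * (m + 1) := by ring
      rw [h2, hg _ (by omega)]
      have h3 : 2 * (m + 1) - 1 = 2 * m + 1 := by omega
      rw [h3, hx, hh, hh0, he]; simp only [hpe, hpo]
      push_cast; ring
    have hda : h (2 * m + 1 - 1) - h (2 * m + 1) = 2 * a₂ * (2 * (m : ℂ) + 1 + s) := by
      simp only [Nat.add_sub_cancel]
      rw [hh, hh]; simp only [hpe, hpo]; push_cast; ring
    have hdb : h (2 * m + 1 - 1) - h (2 * m + 1 + 1) = -(2 * a₂) := by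
      simp only [Nat.add_sub_cancel]
      have h2 : 2 * m + 1 + 1 = 2 * (m + 1) := by ring
      rw [h2, hh, hh]; simp only [hpe]; push_cast; ring
    have hx1 : x (2 * m + 1) = -(r + 1 / 2) * b₂ - b₂ * (2 * (m : ℂ) + 1) := by
      rw [hx]; simp only [hpo]; push_cast; ring
    have hx0 : x (2 * m + 1 - 1) = (r + 1 / 2) * b₂ + b₂ * (2 * (m : ℂ)) := by
      simp only [Nat.add_sub_cancel]
      rw [hx]; simp only [hpe]; push_cast; ring
    have h2 : (2 : ℂ) * a₂ ≠ 0 := mul_ne_zero two_ne_zero ha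
    have h1 : 2 * a₂ * (2 * (m : ℂ) + 1 + s) ≠ 0 := mul_ne_zero h2 hns
    have hq1 : g (2 * m + 1) / (h (2 * m + 1 - 1) - h (2 * m + 1)) =
        (((r + 1 / 2) * b₂ + b₂ * (2 * (m : ℂ)))
          * ((-(s + 1 / 2) * a₂ - a₂ * (2 * (m : ℂ) + 1)) - (s + 1 / 2) * a₂)
        + (-2 * ((t₁ / 2 + 1 / 4) * a₂ * b₂)
            - (t₂ - 1 / 2) * a₂ * b₂ * (2 * (m : ℂ) + 1)))
          / (2 * a₂ * (2 * (m : ℂ) + 1 + s)) := by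
      rw [hg1, hda]
    have hq0 : g (2 * m + 1 - 1) / (h (2 * m + 1 - 2) - h (2 * m + 1)) =
        (((-(r + 1 / 2) * b₂ - b₂ * (2 * (m : ℂ) - 1)) * (a₂ * (2 * (m : ℂ)))
          + (t₂ - 1 / 2) * a₂ * b₂ * (2 * (m : ℂ))) * (2 * (m : ℂ) + 1 + s))
          / (2 * a₂ * (2 * (m : ℂ) + 1 + s)) := by
      rcases m with _ | j
      · norm_num [hg0]
      · have i1 : 2 * (j + 1) + 1 - 1 = 2 * (j + 1) := by omega
        have i2 : 2 * (j + 1) + 1 - 2 = 2 * j + 1 := by omega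
        rw [i1, i2, hg _ (by omega)]
        have i3 : 2 * (j + 1) - 1 = 2 * j + 1 := by omega
        rw [i3, hx, hh, hh0, he]; simp only [hpe, hpo]
        have hden : h (2 * j + 1) - h (2 * (j + 1) + 1) = 2 * a₂ := by
          rw [hh, hh]; simp only [hpe, hpo]; push_cast; ring
        rw [hden, div_eq_div_iff h2 h1]
        push_cast
        ring
    have hq2 : g (2 * m + 1 + 1) / (h (2 * m + 1 - 1) - h (2 * m + 1 + 1)) =
        (-(((-(r + 1 / 2) * b₂ - b₂ * (2 * (m : ℂ) + 1)) * (a₂ * (2 * (m : ℂ) + 2))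
          + (t₂ - 1 / 2) * a₂ * b₂ * (2 * (m : ℂ) + 2)) * (2 * (m : ℂ) + 1 + s)))
          / (2 * a₂ * (2 * (m : ℂ) + 1 + s)) := by
      rw [hg2, hdb, div_eq_div_iff (neg_ne_zero.mpr h2) h1]
      ring
    have hx1q : x (2 * m + 1) =
        ((-(r + 1 / 2) * b₂ - b₂ * (2 * (m : ℂ) + 1)) * (2 * a₂ * (2 * (m : ℂ) + 1 + s)))
          / (2 * a₂ * (2 * (m : ℂ) + 1 + s)) := by
      rw [hx1, mul_div_cancel_right₀ _ h1]
    have hx0q : x (2 * m + 1 - 1) =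
        (((r + 1 / 2) * b₂ + b₂ * (2 * (m : ℂ))) * (2 * a₂ * (2 * (m : ℂ) + 1 + s)))
          / (2 * a₂ * (2 * (m : ℂ) + 1 + s)) := by
      rw [hx0, mul_div_cancel_right₀ _ h1]
    unfold alphaCoeff
    rw [hq1, hq0, hq2, hx1q, hx0q]
    simp only [div_sub_div_same, ← add_div]
    rw [div_mul_div_comm, div_eq_iff (mul_ne_zero h1 h1)]
    push_cast
    field_simp [hns]
    ring
  · intro n hn hodd hns hns1
    obtain ⟨m, rfl⟩ := hodd
    push_cast at hns hns1
    have hg1 : g (2 * m + 1) =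
        ((r + 1 / 2) * b₂ + b₂ * (2 * (m : ℂ)))
          * ((-(s + 1 / 2) * a₂ - a₂ * (2 * (m : ℂ) + 1)) - (s + 1 / 2) * a₂)
        + (-2 * ((t₁ / 2 + 1 / 4) * a₂ * b₂)
            - (t₂ - 1 / 2) * a₂ * b₂ * (2 * (m : ℂ) + 1)) := by
      rw [hg _ (by omega)]
      simp only [Nat.add_sub_cancel]
      rw [hx, hh, hh0, he]; simp only [hpe, hpo]
      push_cast; ring
    have hg2 : g (2 * m + 1 + 1) =
        (-(r + 1 / 2) * b₂ - b₂ * (2 * (m : ℂ) + 1)) * (a₂ * (2 * (m : ℂ) + 2))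
        + (t₂ - 1 / 2) * a₂ * b₂ * (2 * (m : ℂ) + 2) := by
      have h2 : 2 * m + 1 + 1 = 2 * (m + 1) := by ring
      rw [h2, hg _ (by omega)]
      have h3 : 2 * (m + 1) - 1 = 2 * m + 1 := by omega
      rw [h3, hx, hh, hh0, he]; simp only [hpe, hpo]
      push_cast; ring
    have hda : h (2 * m + 1 - 1) - h (2 * m + 1) = 2 * a₂ * (2 * (m : ℂ) + 1 + s) := by
      simp only [Nat.add_sub_cancel]
      rw [hh, hh]; simp only [hpe, hpo]; push_cast; ring
    have hdc : h (2 * m + 1) - h (2 * m + 1 + 1) = -(2 * a₂ * (2 * (m : ℂ) + 1 + 1 + s)) := by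
      have h2 : 2 * m + 1 + 1 = 2 * (m + 1) := by ring
      rw [h2, hh, hh]; simp only [hpe, hpo]; push_cast; ring
    have hx1 : x (2 * m + 1) = -(r + 1 / 2) * b₂ - b₂ * (2 * (m : ℂ) + 1) := by
      rw [hx]; simp only [hpo]; push_cast; ring
    have h2 : (2 : ℂ) * a₂ ≠ 0 := mul_ne_zero two_ne_zero ha
    have h1 : 2 * a₂ * (2 * (m : ℂ) + 1 + s) ≠ 0 := mul_ne_zero h2 hns
    have h1' : -(2 * a₂ * (2 * (m : ℂ) + 1 + 1 + s)) ≠ 0 :=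
      neg_ne_zero.mpr (mul_ne_zero h2 hns1)
    unfold betaCoeff
    rw [hg1, hg2, hda, hdc, hx1]
    rw [add_div' _ _ _ h1', div_sub_div _ _ h1' h1,
      div_eq_div_iff (mul_ne_zero h1' h1) (by
        intro hc
        rcases mul_eq_zero.mp hc with hc | hc
        · rcases mul_eq_zero.mp hc with hc | hc
          · exact two_ne_zero hc
          · exact hns (by push_cast at hc; linear_combination hc)
        · exact hns1 (by push_cast at hc; linear_combination hc))]
    push_cast
    ring
end

section
/- Let b₁, s, t₁, t₂, a₂ ∈ ℂ with a₂ ≠ 0, and set a₁ = (s + 1/2)a₂, d₁ = t₁a₂/2, d₂ = t₂a₂, and x_k = b₁(−1)^k, h_k = a₁(−1)^k + a₂ k(−1)^k, e_k = −d₁ + d₁(−1)^k + d₂ k(−1)^k, g₀ = 0, g_k = x_{k−1}(h_k − h₀) + e_k for k ≥ 1. Let α_n, β_n be the recurrence coefficients defined from x, h, g. Then: (i) for every even n ≥ 2 with n + s ≠ 0, α_n = (b₁ − t₂)² n (n + 2s) / (4(n + s)²); and (ii) for every even n ≥ 0 with n + s ≠ 0 and n + 1 + s ≠ 0, β_n =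 −((b₁ + t₁)n + s(t₁ + t₂)) / (2(n + s)(n + 1 + s)). -/
/-- formulas for `α_n` and `β_n` for even `n` in the parametrization
of the `q = −1` class with `b₂ = 0` and `b₀ = 0`. -/
theorem minus_one_b2_zero_parametrization_even
    (b₁ s t₁ t₂ a₂ : ℂ) (ha : a₂ ≠ 0)
    (a₁ d₁ d₂ : ℂ)
    (ha₁ : a₁ = (s + 1 / 2) * a₂) (hd₁ : d₁ = t₁ * a₂ / 2) (hd₂ : d₂ = t₂ * a₂)
    (x h e g : ℕ → ℂ)
    (hx : ∀ k : ℕ, x k = b₁ * (-1) ^ k)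
    (hh : ∀ k : ℕ, h k = a₁ * (-1) ^ k + a₂ * k * (-1) ^ k)
    (he : ∀ k : ℕ, e k = -d₁ + d₁ * (-1) ^ k + d₂ * k * (-1) ^ k)
    (hg0 : g 0 = 0)
    (hg : ∀ k : ℕ, 1 ≤ k → g k = x (k - 1) * (h k - h 0) + e k) :
    (∀ n : ℕ, 2 ≤ n → Even n → (n : ℂ) + s ≠ 0 →
      alphaCoeff x h g n =
        (b₁ - t₂) ^ 2 * (n : ℂ) * ((n : ℂ) + 2 * s) / (4 * ((n : ℂ) + s) ^ 2)) ∧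
    (∀ n : ℕ, Even n → (n : ℂ) + s ≠ 0 → (n : ℂ) + 1 + s ≠ 0 →
      betaCoeff x h g n =
        -(((b₁ + t₁) * (n : ℂ) + s * (t₁ + t₂)) / (2 * ((n : ℂ) + s) * ((n : ℂ) + 1 + s)))) := by
  have godd : ∀ k : ℕ, Even k →
      g (k+1) = -(a₂*(b₁*(2*s+(k:ℂ)+2) + t₁ + t₂*((k:ℂ)+1))) := by
    intro k hk
    have hk1 : (-1:ℂ)^k = 1 := hk.neg_one_pow
    rw [hg (k+1) (by omega)]
    simp only [Nat.add_sub_cancel, hx, hh, he, pow_succ, hk1, ha₁, hd₁, hd₂]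
    push_cast
    ring
  have geven : ∀ k : ℕ, Even k →
      g (k+2) = a₂*(t₂ - b₁)*((k:ℂ)+2) := by
    intro k hk
    have hk1 : (-1:ℂ)^k = 1 := hk.neg_one_pow
    rw [hg (k+2) (by omega)]
    have e1 : k+2-1 = k+1 := by omega
    rw [e1]
    simp only [hx, hh, he, pow_succ, hk1, ha₁, hd₁, hd₂]
    push_cast
    ring
  constructor
  · intro n hn2 hev hns
    obtain ⟨k, rfl⟩ : ∃ k, n = k + 2 := ⟨n - 2, by omega⟩
    have hk : Even k := by rcases hev with ⟨j, hj⟩; exact ⟨j - 1, by omega⟩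
    have hk1 : (-1:ℂ)^k = 1 := hk.neg_one_pow
    have hkm : Even (k+2) := by rcases hk with ⟨j, rfl⟩; exact ⟨j + 1, by omega⟩
    have hns' : (k:ℂ) + 2 + s ≠ 0 := by
      intro hc; apply hns; push_cast; rw [← hc]
    have hD1 : h (k+1) - h (k+2) = -(2*a₂*((k:ℂ)+2+s)) := by
      rw [hh, hh]; push_cast [pow_succ, hk1, ha₁]; ring
    have hD3 : h k - h (k+2) = -(2*a₂) := by
      rw [hh, hh]; push_cast [pow_succ, hk1]; ring
    have hD4 : h (k+1) - h (k+3) = 2*a₂ := by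
      rw [hh, hh]; push_cast [pow_succ, hk1]; ring
    have hg1 := godd k hk
    have hg2 := geven k hk
    have hg3 := godd (k+2) hkm
    unfold alphaCoeff
    have e1 : k+2-1 = k+1 := by omega
    have e2 : k+2-2 = k := by omega
    have e3 : k+2+1 = k+3 := by omega
    rw [e1, e2, e3, hD1, hD3, hD4, hg1, hg2, hg3, hx, hx]
    have hP : (2:ℂ)*a₂*((k:ℂ)+2+s) ≠ 0 :=
      mul_ne_zero (mul_ne_zero two_ne_zero ha) hns'
    have h2a : (2:ℂ)*a₂ ≠ 0 := mul_ne_zero two_ne_zero ha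
    push_cast [pow_succ, hk1]
    rw [div_neg, div_neg]
    field_simp [hP, h2a, hns']
    ring
  · intro n hev hns hns1
    rcases Nat.eq_zero_or_pos n with h0 | hpos
    · subst h0
      unfold betaCoeff
      simp only [Nat.zero_sub, hg0, zero_div, sub_zero]
      have hg1 := godd 0 (by simp)
      have hD2 : h 0 - h 1 = 2*a₂*(1+s) := by
        rw [hh, hh]; push_cast [ha₁]; ring
      rw [hg1, hD2, hx]
      push_cast at hns hns1 ⊢
      have hs : s ≠ 0 := by simpa using hns
      have h1s : (1:ℂ) + s ≠ 0 := by
        intro hc; apply hns1; rw [zero_add]; exact hc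
      field_simp [ha, hs, h1s]
      ring
    · obtain ⟨k, rfl⟩ : ∃ k, n = k + 2 := ⟨n - 2, by rcases hev with ⟨j, hj⟩; omega⟩
      have hk : Even k := by rcases hev with ⟨j, hj⟩; exact ⟨j - 1, by omega⟩
      have hk1 : (-1:ℂ)^k = 1 := hk.neg_one_pow
      have hkm : Even (k+2) := by rcases hk with ⟨j, rfl⟩; exact ⟨j + 1, by omega⟩
      have hns' : (k:ℂ) + 2 + s ≠ 0 := by
        intro hc; apply hns; push_cast; rw [← hc]
      have hns1' : (k:ℂ) + 3 + s ≠ 0 := by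
        intro hc; apply hns1; push_cast; rw [← hc]; ring
      have hD1 : h (k+1) - h (k+2) = -(2*a₂*((k:ℂ)+2+s)) := by
        rw [hh, hh]; push_cast [pow_succ, hk1, ha₁]; ring
      have hD2 : h (k+2) - h (k+3) = 2*a₂*((k:ℂ)+3+s) := by
        rw [hh, hh]; push_cast [pow_succ, hk1, ha₁]; ring
      have hg2 := geven k hk
      have hg3 := godd (k+2) hkm
      unfold betaCoeff
      have e1 : k+2-1 = k+1 := by omega
      have e3 : k+2+1 = k+3 := by omega
      rw [e1, e3, hD1, hD2, hg2, hg3, hx]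
      have hP : (2:ℂ)*a₂*((k:ℂ)+2+s) ≠ 0 :=
        mul_ne_zero (mul_ne_zero two_ne_zero ha) hns'
      have hQ : (2:ℂ)*a₂*((k:ℂ)+3+s) ≠ 0 :=
        mul_ne_zero (mul_ne_zero two_ne_zero ha) hns1'
      push_cast [pow_succ, hk1]
      have hns1'' : (k:ℂ) + 2 + 1 + s ≠ 0 := by
        intro hc; apply hns1'; rw [← hc]; ring
      rw [div_neg]
      field_simp [ha, hns', hns1', hns1'']
      ring
end

section
/- Let b₁, s, t₁, t₂, a₂ ∈ ℂ with a₂ ≠ 0, and set a₁ = (s + 1/2)a₂, d₁ = t₁a₂/2, d₂ = t₂a₂, and x_k = b₁(−1)^k, h_k = a₁(−1)^k + a₂ k(−1)^k, e_k = −d₁ + d₁(−1)^k + d₂ k(−1)^k, g₀ = 0, g_k = x_{k−1}(h_k − h₀) + e_k for k ≥ 1. Let α_n, β_n be the recurrence coefficients defined from x, h, g. Then: (i) for every odd n ≥ 1 with n + s ≠ 0, α_n = ((b₁ + t₂)n + 2b₁s + b₁ + t₁)·((b₁ + t₂)n + 2s t₂ − b₁ − t₁) / (4(n + s)²); and (ii)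 for every odd n ≥ 1 with n + s ≠ 0 and n + 1 + s ≠ 0, β_n = ((b₁ + t₁)(n + 1) + s(2b₁ + t₁ − t₂)) / (2(n + s)(n + 1 + s)). -/
/-- formulas for `α_n` and `β_n` for odd `n` in the parametrization
of the `q = −1` class with `b₂ = 0` and `b₀ = 0`. -/
theorem minus_one_b2_zero_parametrization_odd
    (b₁ s t₁ t₂ a₂ : ℂ) (ha : a₂ ≠ 0)
    (a₁ d₁ d₂ : ℂ)
    (ha₁ : a₁ = (s + 1 / 2) * a₂) (hd₁ : d₁ = t₁ * a₂ / 2) (hd₂ : d₂ = t₂ * a₂)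
    (x h e g : ℕ → ℂ)
    (hx : ∀ k : ℕ, x k = b₁ * (-1) ^ k)
    (hh : ∀ k : ℕ, h k = a₁ * (-1) ^ k + a₂ * k * (-1) ^ k)
    (he : ∀ k : ℕ, e k = -d₁ + d₁ * (-1) ^ k + d₂ * k * (-1) ^ k)
    (hg0 : g 0 = 0)
    (hg : ∀ k : ℕ, 1 ≤ k → g k = x (k - 1) * (h k - h 0) + e k) :
    (∀ n : ℕ, 1 ≤ n → Odd n → (n : ℂ) + s ≠ 0 →
      alphaCoeff x h g n =
        ((b₁ + t₂) * (n : ℂ) + 2 * b₁ * s + b₁ + t₁)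
          * ((b₁ + t₂) * (n : ℂ) + 2 * s * t₂ - b₁ - t₁)
          / (4 * ((n : ℂ) + s) ^ 2)) ∧
    (∀ n : ℕ, 1 ≤ n → Odd n → (n : ℂ) + s ≠ 0 → (n : ℂ) + 1 + s ≠ 0 →
      betaCoeff x h g n =
        ((b₁ + t₁) * ((n : ℂ) + 1) + s * (2 * b₁ + t₁ - t₂))
          / (2 * ((n : ℂ) + s) * ((n : ℂ) + 1 + s))) := by
  have npe : ∀ k : ℕ, ((-1 : ℂ)) ^ (2 * k) = 1 := fun k => by
    rw [pow_mul]; norm_num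
  have npo : ∀ k : ℕ, ((-1 : ℂ)) ^ (2 * k + 1) = -1 := fun k => by
    rw [pow_succ, npe]; norm_num
  have Hx0 : ∀ k : ℕ, x (2 * k) = b₁ := fun k => by rw [hx, npe, mul_one]
  have Hx1 : ∀ k : ℕ, x (2 * k + 1) = -b₁ := fun k => by rw [hx, npo]; ring
  have Hh0 : ∀ k : ℕ, h (2 * k) = a₁ + 2 * a₂ * (k : ℂ) := fun k => by
    rw [hh, npe]; push_cast; ring
  have Hh1 : ∀ k : ℕ, h (2 * k + 1) = -(a₁ + a₂ * (2 * (k : ℂ) + 1)) := fun k => by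
    rw [hh, npo]; push_cast; ring
  have Hh00 : h 0 = a₁ := by
    have := Hh0 0; simpa using this
  have Hg1 : ∀ k : ℕ, g (2 * k + 1)
      = -b₁ * (2 * a₁ + a₂ * (2 * (k : ℂ) + 1)) - 2 * d₁ - d₂ * (2 * (k : ℂ) + 1) := by
    intro k
    rw [hg _ (by omega), show (2 * k + 1) - 1 = 2 * k from by omega,
      Hx0, Hh1, Hh00, he, npo]
    push_cast; ring
  have Hg0 : ∀ k : ℕ, g (2 * k) = 2 * (k : ℂ) * (d₂ - b₁ * a₂) := by
    intro k
    rcases Nat.eq_zero_or_pos k with rfl | hk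
    · simpa using hg0
    · rw [hg _ (by omega), show (2 * k) - 1 = 2 * (k - 1) + 1 from by omega,
        Hx1, Hh0, Hh00, he, npe]
      push_cast; ring
  have h2ne : (2 : ℂ) ≠ 0 := two_ne_zero
  constructor
  · intro n hn hodd hns
    obtain ⟨m, rfl⟩ := hodd
    push_cast at hns
    have hs1 : 2 * (m : ℂ) + 1 + s ≠ 0 := fun hc => hns (by linear_combination hc)
    have key : g ((2 * m + 1) - 1) / (h ((2 * m + 1) - 2) - h (2 * m + 1))
        = (m : ℂ) * (t₂ - b₁) := by
      rcases Nat.eq_zero_or_pos m with rfl | hm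
      · norm_num [hg0]
      · rw [show (2 * m + 1) - 1 = 2 * m from by omega,
          show (2 * m + 1) - 2 = 2 * (m - 1) + 1 from by omega,
          Hg0, Hh1, Hh1, Nat.cast_sub (by omega), hd₂]
        push_cast
        rw [show -(a₁ + a₂ * (2 * ((m : ℂ) - 1) + 1)) - -(a₁ + a₂ * (2 * (m : ℂ) + 1))
            = 2 * a₂ from by ring,
          div_eq_iff (mul_ne_zero h2ne ha)]
        ring
    have T1 : g (2 * m + 1) / (h (2 * m) - h (2 * m + 1))
        = -(b₁ * (2 * s + 1 + (2 * (m : ℂ) + 1)) + t₁ + t₂ * (2 * (m : ℂ) + 1))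
            / (2 * (2 * (m : ℂ) + 1 + s)) := by
      rw [Hg1, show h (2 * m) - h (2 * m + 1) = 2 * a₂ * (2 * (m : ℂ) + 1 + s) from by
        rw [Hh0, Hh1, ha₁]; ring, ha₁, hd₁, hd₂,
        div_eq_div_iff (mul_ne_zero (mul_ne_zero h2ne ha) hs1) (mul_ne_zero h2ne hs1)]
      ring
    have T2 : g (2 * (m + 1)) / (h (2 * m) - h (2 * (m + 1)))
        = -((t₂ - b₁) * ((m : ℂ) + 1)) := by
      rw [Hg0, show h (2 * m) - h (2 * (m + 1)) = -(2 * a₂) from by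
        rw [Hh0, Hh0]; push_cast; ring, hd₂,
        div_eq_iff (neg_ne_zero.mpr (mul_ne_zero h2ne ha))]
      push_cast; ring
    rw [alphaCoeff, key,
      show (2 * m + 1) - 1 = 2 * m from by omega,
      show (2 * m + 1) + 1 = 2 * (m + 1) from by omega,
      T1, T2, Hx1, Hx0]
    push_cast
    field_simp
    ring
  · intro n hn hodd hns hns'
    obtain ⟨m, rfl⟩ := hodd
    push_cast at hns hns'
    have hs1 : 2 * (m : ℂ) + 1 + s ≠ 0 := fun hc => hns (by linear_combination hc)
    have hs2 : 2 * (m : ℂ) + 2 + s ≠ 0 := fun hc => hns' (by linear_combination hc)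
    have T1 : g (2 * m + 1) / (h (2 * m) - h (2 * m + 1))
        = -(b₁ * (2 * s + 1 + (2 * (m : ℂ) + 1)) + t₁ + t₂ * (2 * (m : ℂ) + 1))
            / (2 * (2 * (m : ℂ) + 1 + s)) := by
      rw [Hg1, show h (2 * m) - h (2 * m + 1) = 2 * a₂ * (2 * (m : ℂ) + 1 + s) from by
        rw [Hh0, Hh1, ha₁]; ring, ha₁, hd₁, hd₂,
        div_eq_div_iff (mul_ne_zero (mul_ne_zero h2ne ha) hs1) (mul_ne_zero h2ne hs1)]
      ring
    have T3 : g (2 * (m + 1)) / (h (2 * m + 1) - h (2 * (m + 1)))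
        = -((t₂ - b₁) * ((m : ℂ) + 1)) / (2 * (m : ℂ) + 2 + s) := by
      rw [Hg0, show h (2 * m + 1) - h (2 * (m + 1)) = -(2 * a₂ * (2 * (m : ℂ) + 2 + s)) from by
        rw [Hh1, Hh0, ha₁]; push_cast; ring, hd₂,
        div_eq_div_iff (neg_ne_zero.mpr (mul_ne_zero (mul_ne_zero h2ne ha) hs2)) hs2]
      push_cast; ring
    rw [betaCoeff,
      show (2 * m + 1) - 1 = 2 * m from by omega,
      show (2 * m + 1) + 1 = 2 * (m + 1) from by omega,
      T1, T3, Hx1]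
    push_cast
    rw [show (2 : ℂ) * m + 1 + 1 + s = 2 * m + 2 + s by ring]
    rw [neg_add_eq_sub, div_sub' hs2, div_sub_div _ _ hs2 (mul_ne_zero two_ne_zero hs1), div_eq_div_iff (mul_ne_zero hs2 (mul_ne_zero two_ne_zero hs1)) (mul_ne_zero (mul_ne_zero two_ne_zero hs1) hs2)]
    ring
end

section
/- Let y₁, y₂, w₁, w₂ ∈ ℝ and define, for integers n ≥ 1, α_n = n(n + 2y₁)((n + y₁)² + y₂²)/(4(n + y₁)²) when n is even, and α_n = ((n + y₁)² − w₁²)((n + y₁)² + w₂²)/(4(n + y₁)²) when n is odd. If y₁ > −1, y₁ + w₁ > −1 and y₁ − w₁ > −1, then α_n > 0 for every n ≥ 1. -/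
/-- positivity of the recurrence coefficients `α_n` of the continuous
family of `−1` orthogonal polynomials containing the continuous Bannai–Ito
polynomials. -/
theorem continuous_minus_one_alpha_positive
    (y₁ y₂ w₁ w₂ : ℝ) (α : ℕ → ℝ)
    (hαeven : ∀ n : ℕ, 1 ≤ n → Even n →
      α n = (n : ℝ) * ((n : ℝ) + 2 * y₁) * (((n : ℝ) + y₁) ^ 2 + y₂ ^ 2)
              / (4 * ((n : ℝ) + y₁) ^ 2))
    (hαodd : ∀ n : ℕ, 1 ≤ n → Odd n →
      α n = (((n : ℝ) + y₁) ^ 2 - w₁ ^ 2) * (((n : ℝ) + y₁) ^ 2 + w₂ ^ 2)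
              / (4 * ((n : ℝ) + y₁) ^ 2))
    (hy : y₁ > -1) (hyw : y₁ + w₁ > -1) (hyw' : y₁ - w₁ > -1) :
    ∀ n : ℕ, 1 ≤ n → α n > 0 := by
  intro n hn
  have hn1 : (1 : ℝ) ≤ (n : ℝ) := by exact_mod_cast hn
  have hny : (0 : ℝ) < (n : ℝ) + y₁ := by linarith
  have hden : (0 : ℝ) < 4 * ((n : ℝ) + y₁) ^ 2 := by positivity
  rcases Nat.even_or_odd n with he | ho
  · rw [hαeven n hn he]
    have hn2 : (2 : ℝ) ≤ (n : ℝ) := by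
      have : 2 ≤ n := by
        rcases he with ⟨k, hk⟩
        omega
      exact_mod_cast this
    have h1 : (0 : ℝ) < (n : ℝ) + 2 * y₁ := by linarith
    have h2 : (0 : ℝ) < ((n : ℝ) + y₁) ^ 2 + y₂ ^ 2 := by positivity
    have h0 : (0 : ℝ) < (n : ℝ) := by linarith
    positivity
  · rw [hαodd n hn ho]
    have h1 : (0 : ℝ) < ((n : ℝ) + y₁) ^ 2 - w₁ ^ 2 := by
      have ha : (0 : ℝ) < (n : ℝ) + y₁ + w₁ := by linarith
      have hb : (0 : ℝ) < (n : ℝ) + y₁ - w₁ := by linarith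
      nlinarith
    have h2 : (0 : ℝ) < ((n : ℝ) + y₁) ^ 2 + w₂ ^ 2 := by positivity
    positivity
end

section
/- Let a₁, a₂, b₀, b₁, b₂, d₁, d₂ ∈ ℂ with a₂ ≠ 0 and 2a₁ + m a₂ ≠ 0 for every odd positive integer m. Set x_k = b₀ + b₁(−1)^k + b₂ k(−1)^k, h_k = a₁(−1)^k + a₂ k(−1)^k, e_k = −d₁ + d₁(−1)^k + d₂ k(−1)^k, g₀ = 0, g_k = x_{k−1}(h_k − h₀) + e_k for k ≥ 1, and let α_n, β_n be the recurrence coefficients defined from x, h, g. Put w = b₀ + b₁ and define sequences y, z by y₀ = 0, z₀ = β₀ − w, y_{k+1} = α_{k+1}/z_k and z_{k+1} = β_{k+1} − w − y_{k+1}, assuming z_k ≠ 0 for all k ≥ 0. Then the diagonal entries M_{k,k} = y_{k+1} + z_k + w of the Darboux-transformed Jacobi matrix satisfy: M_{k,k} = −d₂/a₂ for every even k ≥ 0, and M_{k,k} = (a₂(2b₀ + b₂) + d₂)/a₂ for every odd k ≥ 1. -/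
/-- Closed form for the entries of the `Z` sequence in the `LU` factorization. -/
noncomputable def zClosed (a₁ a₂ b₀ b₁ b₂ d₁ d₂ : ℂ) (k : ℕ) : ℂ :=
  if Even k then
    (-(2*d₁) - d₂ - (2*a₁+a₂)*(b₀+b₁) + (-d₂ - 2*a₁*b₂ - a₂*(b₀+b₁) - a₂*b₂)*(k:ℂ)
        - a₂*b₂*(k:ℂ)^2) / (2*a₁ + (2*(k:ℂ)+1)*a₂)
  else
    (2*a₁*(d₂+a₂*(b₀-b₁)) + a₂*(d₂-2*a₁*b₂+a₂*(b₀-b₁))*(k:ℂ) - a₂^2*b₂*(k:ℂ)^2)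
      / (a₂*(2*a₁ + (2*(k:ℂ)+1)*a₂))

set_option maxHeartbeats 2000000 in
/-- diagonal entries of the Darboux transform with shift `w = b₀ + b₁`
of the Jacobi matrix of the `q = −1` class: `M_{k,k} = y_{k+1} + z_k + w` equals
`−d₂/a₂` for even `k` and `(a₂(2b₀ + b₂) + d₂)/a₂` for odd `k`. -/
theorem darboux_diagonal_shift_b0_add_b1
    (a₁ a₂ b₀ b₁ b₂ d₁ d₂ : ℂ) (ha : a₂ ≠ 0)
    (hodd : ∀ m : ℕ, Odd m → 2 * a₁ + (m : ℂ) * a₂ ≠ 0)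
    (x h e g : ℕ → ℂ)
    (hx : ∀ k : ℕ, x k = b₀ + b₁ * (-1) ^ k + b₂ * k * (-1) ^ k)
    (hh : ∀ k : ℕ, h k = a₁ * (-1) ^ k + a₂ * k * (-1) ^ k)
    (he : ∀ k : ℕ, e k = -d₁ + d₁ * (-1) ^ k + d₂ * k * (-1) ^ k)
    (hg0 : g 0 = 0)
    (hg : ∀ k : ℕ, 1 ≤ k → g k = x (k - 1) * (h k - h 0) + e k)
    (w : ℂ) (hw : w = b₀ + b₁)
    (y z : ℕ → ℂ)
    (hy0 : y 0 = 0) (hz0 : z 0 = betaCoeff x h g 0 - w)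
    (hznz : ∀ k : ℕ, z k ≠ 0)
    (hy : ∀ k : ℕ, y (k + 1) = alphaCoeff x h g (k + 1) / z k)
    (hz : ∀ k : ℕ, z (k + 1) = betaCoeff x h g (k + 1) - w - y (k + 1)) :
    (∀ k : ℕ, Even k → y (k + 1) + z k + w = -d₂ / a₂) ∧
    (∀ k : ℕ, Odd k → y (k + 1) + z k + w = (a₂ * (2 * b₀ + b₂) + d₂) / a₂) := by
  have hD : ∀ n : ℕ, 2*a₁ + (2*(n:ℂ)+1)*a₂ ≠ 0 := by
    intro n hc
    exact hodd (2*n+1) ⟨n, by ring⟩ (by push_cast; linear_combination hc)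
  have hΔ1 : ∀ n : ℕ, h n - h (n+1) = (-1)^n * (2*a₁ + (2*(n:ℂ)+1)*a₂) := by
    intro n; rw [hh n, hh (n+1)]; push_cast; ring
  have hΔ2 : ∀ n : ℕ, h n - h (n+2) = (-1)^(n+1) * (2*a₂) := by
    intro n; rw [hh n, hh (n+2)]; push_cast; ring
  have h2a : (2:ℂ)*a₂ ≠ 0 := mul_ne_zero two_ne_zero ha
  -- the closed form for `z`
  have key : ∀ k : ℕ, z k = zClosed a₁ a₂ b₀ b₁ b₂ d₁ d₂ k := by
    intro k
    induction k with
    | zero =>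
      rw [hz0, betaCoeff, hg0, hg 1 le_rfl, hΔ1 0, zClosed, if_pos Even.zero]
      simp only [hx, hh, he, hw, zero_div, sub_zero, Nat.sub_self]
      simp only [pow_zero, pow_one, one_mul, neg_one_mul, div_neg, neg_neg]
      have hd0 := hD 0
      push_cast at hd0 ⊢
      field_simp [hd0]
      ring
    | succ n ih =>
      have hzc := hznz n
      rw [ih] at hzc
      rw [hz n, hy n, ih]
      obtain rfl | ⟨m, rfl⟩ | ⟨m, rfl⟩ :
          n = 0 ∨ (∃ m, n = m+m+1) ∨ (∃ m, n = m+m+2) := by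
        rcases Nat.even_or_odd n with ⟨t, ht⟩ | ⟨t, ht⟩
        · rcases t with _ | t
          · exact Or.inl (by omega)
          · exact Or.inr (Or.inr ⟨t, by omega⟩)
        · exact Or.inr (Or.inl ⟨t, by omega⟩)
      · -- n = 0
        rw [zClosed, if_pos Even.zero] at hzc ⊢
        obtain ⟨hN, -⟩ := div_ne_zero_iff.mp hzc
        rw [betaCoeff, alphaCoeff, zClosed, if_neg (by decide : ¬ Even 1)]
        simp only [show (0:ℕ)+1 = 1 from rfl, show (1:ℕ)+1 = 2 from rfl,
          show (1:ℕ)-1 = 0 from rfl, show (1:ℕ)-2 = 0 from rfl, show (2:ℕ)-1 = 1 from rfl]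
        rw [hg0, hg 1 le_rfl, hg 2 (by omega),
          show h 1 - h 2 = h 1 - h (1+1) from rfl, hΔ1 1,
          show h 0 - h 1 = h 0 - h (0+1) from rfl, hΔ1 0,
          show h 0 - h 2 = h 0 - h (0+2) from rfl, hΔ2 0]
        simp only [hx, hh, he, hw, show (1:ℕ)-1 = 0 from rfl, show (2:ℕ)-1 = 1 from rfl]
        simp only [pow_zero, pow_one, show ((-1:ℂ))^(2:ℕ) = 1 from by norm_num,
          show ((-1:ℂ))^((0:ℕ)+1) = -1 from by norm_num, neg_one_mul, one_mul, div_neg, neg_neg]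
        rw [div_div_eq_mul_div]
        have hd0 := hD 0; have hd1 := hD 1
        push_cast at hd0 hd1 hN ⊢
        norm_num at hd0 hd1 hN ⊢
        rw [sub_eq_iff_eq_add, ← sub_eq_iff_eq_add', eq_div_iff hN]
        field_simp at hd0 hd1
        field_simp [hd0, hd1, h2a, ha]
        ring
      · -- n = m + m + 1
        have hodd1 : ¬ Even (m+m+1) := by simp [Nat.even_add_one, Nat.even_add]
        have heven2 : Even (m+m+1+1) := ⟨m+1, by ring⟩
        have hp0 : ((-1:ℂ))^(m+m) = 1 := Even.neg_one_pow ⟨m, rfl⟩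
        have hp1 : ((-1:ℂ))^(m+m+1) = -1 := by rw [pow_succ, hp0, one_mul]
        have hp2 : ((-1:ℂ))^(m+m+2) = 1 := by rw [pow_succ, hp1]; norm_num
        have hp3 : ((-1:ℂ))^(m+m+3) = -1 := by rw [pow_succ, hp2, one_mul]
        rw [zClosed, if_neg hodd1] at hzc ⊢
        obtain ⟨hN, -⟩ := div_ne_zero_iff.mp hzc
        rw [betaCoeff, alphaCoeff, zClosed, if_pos heven2]
        simp only [show m+m+1+1-2 = m+m from rfl,
          show m+m+1+1 = m+m+2 from rfl, show m+m+2+1 = m+m+3 from rfl,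
          show m+m+2-1 = m+m+1 from rfl]
        rw [hg (m+m+1) (by omega), hg (m+m+2) (by omega), hg (m+m+3) (by omega)]
        simp only [Nat.add_sub_cancel, show m+m+1-1 = m+m from rfl,
          show m+m+2-1 = m+m+1 from rfl, show m+m+3-1 = m+m+2 from rfl]
        rw [show h (m+m+1) - h (m+m+2) = h (m+m+1) - h (m+m+1+1) from rfl, hΔ1 (m+m+1),
            show h (m+m+2) - h (m+m+3) = h (m+m+2) - h (m+m+2+1) from rfl, hΔ1 (m+m+2),
            hΔ2 (m+m),
            show h (m+m+1) - h (m+m+3) = h (m+m+1) - h (m+m+1+2) from rfl, hΔ2 (m+m+1)]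
        simp only [hx, hh, he, hw, show m+m+1+1 = m+m+2 from rfl,
          show m+m+1+2 = m+m+3 from rfl]
        simp only [hp0, hp1, hp2, hp3, pow_zero, neg_one_mul, one_mul, div_neg, neg_neg]
        have hd1 := hD (m+m+1); have hd2 := hD (m+m+2)
        rw [div_div_eq_mul_div]
        push_cast at hd1 hd2 hN ⊢
        rw [sub_eq_iff_eq_add, ← sub_eq_iff_eq_add', eq_div_iff hN]
        generalize eA : 2 * a₁ + (2 * ((m:ℂ) + m + 1) + 1) * a₂ = DA at hd1 ⊢
        generalize eB : 2 * a₁ + (2 * ((m:ℂ) + m + 2) + 1) * a₂ = DB at hd2 ⊢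
        field_simp [hd1, hd2, h2a, ha]
        subst DA DB
        ring
      · -- n = m + m + 2
        have heven2 : Even (m+m+2) := ⟨m+1, by ring⟩
        have hodd3 : ¬ Even (m+m+2+1) := by simp [Nat.even_add_one, Nat.even_add]
        have hp0 : ((-1:ℂ))^(m+m) = 1 := Even.neg_one_pow ⟨m, rfl⟩
        have hp1 : ((-1:ℂ))^(m+m+1) = -1 := by rw [pow_succ, hp0, one_mul]
        have hp2 : ((-1:ℂ))^(m+m+2) = 1 := by rw [pow_succ, hp1]; norm_num
        have hp3 : ((-1:ℂ))^(m+m+3) = -1 := by rw [pow_succ, hp2, one_mul]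
        have hp4 : ((-1:ℂ))^(m+m+4) = 1 := by rw [pow_succ, hp3]; norm_num
        rw [zClosed, if_pos heven2] at hzc ⊢
        obtain ⟨hN, -⟩ := div_ne_zero_iff.mp hzc
        rw [betaCoeff, alphaCoeff, zClosed, if_neg hodd3]
        simp only [show m+m+2+1-2 = m+m+1 from rfl,
          show m+m+2+1 = m+m+3 from rfl, show m+m+3+1 = m+m+4 from rfl,
          show m+m+3-1 = m+m+2 from rfl]
        rw [hg (m+m+2) (by omega), hg (m+m+3) (by omega), hg (m+m+4) (by omega)]
        simp only [Nat.add_sub_cancel, show m+m+2-1 = m+m+1 from rfl,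
          show m+m+3-1 = m+m+2 from rfl, show m+m+4-1 = m+m+3 from rfl]
        rw [show h (m+m+2) - h (m+m+3) = h (m+m+2) - h (m+m+2+1) from rfl, hΔ1 (m+m+2),
            show h (m+m+3) - h (m+m+4) = h (m+m+3) - h (m+m+3+1) from rfl, hΔ1 (m+m+3),
            show h (m+m+1) - h (m+m+3) = h (m+m+1) - h (m+m+1+2) from rfl, hΔ2 (m+m+1),
            show h (m+m+2) - h (m+m+4) = h (m+m+2) - h (m+m+2+2) from rfl, hΔ2 (m+m+2)]
        simp only [hx, hh, he, hw, show m+m+2+1 = m+m+3 from rfl,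
          show m+m+1+2 = m+m+3 from rfl, show m+m+2+2 = m+m+4 from rfl]
        simp only [hp0, hp1, hp2, hp3, hp4, pow_zero, neg_one_mul, one_mul, div_neg, neg_neg]
        have hd2 := hD (m+m+2); have hd3 := hD (m+m+3)
        rw [div_div_eq_mul_div]
        push_cast at hd2 hd3 hN ⊢
        rw [sub_eq_iff_eq_add, ← sub_eq_iff_eq_add', eq_div_iff hN]
        generalize eA : 2 * a₁ + (2 * ((m:ℂ) + m + 2) + 1) * a₂ = DA at hd2 ⊢
        generalize eB : 2 * a₁ + (2 * ((m:ℂ) + m + 3) + 1) * a₂ = DB at hd3 ⊢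
        field_simp [hd2, hd3, h2a, ha]
        subst DA DB
        ring
  -- express `y (k+1)` via `z (k+1)`
  have hy' : ∀ k : ℕ, y (k + 1) = betaCoeff x h g (k + 1) - w - z (k + 1) := by
    intro k; rw [hz k]; ring
  constructor
  · intro k hk
    obtain ⟨m, rfl⟩ := hk
    rw [hy' (m+m), key (m+m), key (m+m+1), betaCoeff]
    have hodd1 : ¬ Even (m+m+1) := by simp [Nat.even_add_one, Nat.even_add]
    have hp0 : ((-1:ℂ))^(m+m) = 1 := Even.neg_one_pow ⟨m, rfl⟩
    have hp1 : ((-1:ℂ))^(m+m+1) = -1 := by rw [pow_succ, hp0, one_mul]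
    have hp2 : ((-1:ℂ))^(m+m+2) = 1 := by rw [pow_succ, hp1]; norm_num
    have hev0 : Even (m+m) := ⟨m, rfl⟩
    rw [zClosed, if_neg hodd1, zClosed, if_pos hev0]
    simp only [Nat.add_sub_cancel, show m+m+1+1 = m+m+2 from rfl]
    rw [hg (m+m+1) (by omega), hg (m+m+2) (by omega)]
    simp only [Nat.add_sub_cancel, show m+m+1-1 = m+m from rfl,
      show m+m+2-1 = m+m+1 from rfl]
    rw [hΔ1 (m+m),
        show h (m+m+1) - h (m+m+2) = h (m+m+1) - h (m+m+1+1) from rfl, hΔ1 (m+m+1)]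
    simp only [hx, hh, he, hw, show m+m+1+1 = m+m+2 from rfl]
    simp only [hp0, hp1, hp2, pow_zero, neg_one_mul, one_mul, div_neg, neg_neg]
    have hd0 := hD (m+m); have hd1 := hD (m+m+1)
    push_cast at hd0 hd1 ⊢
    generalize eA : 2 * a₁ + (2 * ((m:ℂ) + m) + 1) * a₂ = DA at hd0 ⊢
    generalize eB : 2 * a₁ + (2 * ((m:ℂ) + m + 1) + 1) * a₂ = DB at hd1 ⊢
    field_simp [hd0, hd1, ha]
    subst DA DB
    ring
  · intro k hk
    obtain ⟨m, hm⟩ := hk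
    obtain ⟨m, rfl⟩ : ∃ t, k = t + t + 1 := ⟨m, by omega⟩
    rw [hy' (m+m+1), key (m+m+1), key (m+m+2), betaCoeff]
    have hodd1 : ¬ Even (m+m+1) := by simp [Nat.even_add_one, Nat.even_add]
    have heven2 : Even (m+m+2) := ⟨m+1, by ring⟩
    have hp0 : ((-1:ℂ))^(m+m) = 1 := Even.neg_one_pow ⟨m, rfl⟩
    have hp1 : ((-1:ℂ))^(m+m+1) = -1 := by rw [pow_succ, hp0, one_mul]
    have hp2 : ((-1:ℂ))^(m+m+2) = 1 := by rw [pow_succ, hp1]; norm_num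
    have hp3 : ((-1:ℂ))^(m+m+3) = -1 := by rw [pow_succ, hp2, one_mul]
    rw [zClosed, if_pos heven2, zClosed, if_neg hodd1]
    simp only [show m+m+1+1 = m+m+2 from rfl, show m+m+2+1 = m+m+3 from rfl,
      show m+m+2-1 = m+m+1 from rfl]
    rw [hg (m+m+2) (by omega), hg (m+m+3) (by omega)]
    simp only [Nat.add_sub_cancel, show m+m+2-1 = m+m+1 from rfl,
      show m+m+3-1 = m+m+2 from rfl]
    rw [show h (m+m+2) - h (m+m+3) = h (m+m+2) - h (m+m+2+1) from rfl, hΔ1 (m+m+2),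
        show h (m+m+1) - h (m+m+2) = h (m+m+1) - h (m+m+1+1) from rfl, hΔ1 (m+m+1)]
    simp only [hx, hh, he, hw, show m+m+1+1 = m+m+2 from rfl, show m+m+2+1 = m+m+3 from rfl]
    simp only [hp0, hp1, hp2, hp3, pow_zero, neg_one_mul, one_mul, div_neg, neg_neg]
    have hd1 := hD (m+m+1); have hd2 := hD (m+m+2)
    push_cast at hd1 hd2 ⊢
    generalize eA : 2 * a₁ + (2 * ((m:ℂ) + m + 1) + 1) * a₂ = DA at hd1 ⊢
    generalize eB : 2 * a₁ + (2 * ((m:ℂ) + m + 2) + 1) * a₂ = DB at hd2 ⊢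
    field_simp [hd1, hd2, ha]
    subst DA DB
    ring
end

section
/- Let a₁, a₂, b₀, b₁, b₂, d₁, d₂ ∈ ℂ with a₂ ≠ 0 and 2a₁ + m a₂ ≠ 0 for every odd positive integer m. Set x_k = b₀ + b₁(−1)^k + b₂ k(−1)^k, h_k = a₁(−1)^k + a₂ k(−1)^k, e_k = −d₁ + d₁(−1)^k + d₂ k(−1)^k, g₀ = 0, g_k = x_{k−1}(h_k − h₀) + e_k for k ≥ 1, and let α_n, β_n be the recurrence coefficients defined from x, h, g. Put w = −d₂/a₂ and define sequences y, z by y₀ = 0, z₀ = β₀ − w, y_{k+1} = α_{k+1}/z_k and z_{k+1} = β_{k+1} − w − y_{k+1}, assuming z_k ≠ 0 for all k ≥ 0. Then the diagonal entries M_{k,k} = y_{k+1} + z_k + w of the Darboux-transformed Jacobi matrix satisfy: M_{k,k} = b₀ + b₁ for every even k ≥ 0, and M_{k,k} = b₀ − b₁ + b₂ for every odd k ≥ 1. -/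
set_option maxHeartbeats 3200000 in
/-- diagonal entries of the Darboux transform with shift `w = −d₂/a₂`
of the Jacobi matrix of the `q = −1` class: `M_{k,k} = y_{k+1} + z_k + w` equals
`b₀ + b₁` for even `k` and `b₀ − b₁ + b₂` for odd `k`. -/
theorem darboux_diagonal_shift_neg_d2_div_a2
    (a₁ a₂ b₀ b₁ b₂ d₁ d₂ : ℂ) (ha : a₂ ≠ 0)
    (hodd : ∀ m : ℕ, Odd m → 2 * a₁ + (m : ℂ) * a₂ ≠ 0)
    (x h e g : ℕ → ℂ)
    (hx : ∀ k : ℕ, x k = b₀ + b₁ * (-1) ^ k + b₂ * k * (-1) ^ k)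
    (hh : ∀ k : ℕ, h k = a₁ * (-1) ^ k + a₂ * k * (-1) ^ k)
    (he : ∀ k : ℕ, e k = -d₁ + d₁ * (-1) ^ k + d₂ * k * (-1) ^ k)
    (hg0 : g 0 = 0)
    (hg : ∀ k : ℕ, 1 ≤ k → g k = x (k - 1) * (h k - h 0) + e k)
    (w : ℂ) (hw : w = -d₂ / a₂)
    (y z : ℕ → ℂ)
    (hy0 : y 0 = 0) (hz0 : z 0 = betaCoeff x h g 0 - w)
    (hznz : ∀ k : ℕ, z k ≠ 0)
    (hy : ∀ k : ℕ, y (k + 1) = alphaCoeff x h g (k + 1) / z k)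
    (hz : ∀ k : ℕ, z (k + 1) = betaCoeff x h g (k + 1) - w - y (k + 1)) :
    (∀ k : ℕ, Even k → y (k + 1) + z k + w = b₀ + b₁) ∧
    (∀ k : ℕ, Odd k → y (k + 1) + z k + w = b₀ - b₁ + b₂) := by
  have hpe : ∀ j : ℕ, (-1:ℂ)^(2*j) = 1 := fun j => by rw [pow_mul]; norm_num
  have hpo : ∀ j : ℕ, (-1:ℂ)^(2*j+1) = -1 := fun j => by rw [pow_succ, pow_mul]; norm_num
  have h2a : (2:ℂ)*a₂ ≠ 0 := mul_ne_zero two_ne_zero ha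
  have hn2a : -((2:ℂ)*a₂) ≠ 0 := neg_ne_zero.mpr h2a
  have hP1 : ∀ j : ℕ, 2*a₁+(4*(j:ℂ)+1)*a₂ ≠ 0 := by
    intro j hj
    exact hodd (4*j+1) ⟨2*j, by omega⟩ (by push_cast; linear_combination hj)
  have hP3 : ∀ j : ℕ, 2*a₁+(4*(j:ℂ)+3)*a₂ ≠ 0 := by
    intro j hj
    exact hodd (4*j+3) ⟨2*j+1, by omega⟩ (by push_cast; linear_combination hj)
  have hP5 : ∀ j : ℕ, 2*a₁+(4*(j:ℂ)+5)*a₂ ≠ 0 := by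
    intro j hj
    exact hodd (4*j+5) ⟨2*j+2, by omega⟩ (by push_cast; linear_combination hj)
  have h1a : 2*a₁+a₂ ≠ 0 := by
    intro hc; exact hodd 1 ⟨0, by omega⟩ (by push_cast; linear_combination hc)
  have hH0 : h 0 = a₁ := by rw [hh]; norm_num
  have hX0 : x 0 = b₀ + b₁ := by rw [hx]; norm_num
  have hXe : ∀ j : ℕ, x (2*j) = (b₀+b₁+2*b₂*((j:ℂ))) := by
    intro j; rw [hx, hpe]; push_cast; ring
  have hXo : ∀ j : ℕ, x (2*j+1) = (b₀-b₁-(2*((j:ℂ))+1)*b₂) := by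
    intro j; rw [hx, hpo]; push_cast; ring
  have hHe : ∀ j : ℕ, h (2*j) = a₁+2*a₂*(j:ℂ) := by
    intro j; rw [hh, hpe]; push_cast; ring
  have hHo : ∀ j : ℕ, h (2*j+1) = -(a₁+(2*(j:ℂ)+1)*a₂) := by
    intro j; rw [hh, hpo]; push_cast; ring
  have hGe : ∀ j : ℕ, g (2*j) = (2*((j:ℂ))*(a₂*(b₀-b₁-(2*((j:ℂ))-1)*b₂)+d₂)) := by
    intro j
    match j with
    | 0 => rw [show 2*0 = 0 by omega, hg0]; push_cast; ring
    | Nat.succ i =>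
      rw [hg (2*(i+1)) (by omega), show 2*(i+1)-1 = 2*i+1 by omega,
        hXo i, hHe (i+1), he, hH0, hpe (i+1)]
      push_cast; ring
  have hGo : ∀ j : ℕ, g (2*j+1) = (-(b₀+b₁+2*b₂*((j:ℂ)))*(2*a₁+(2*((j:ℂ))+1)*a₂)-2*d₁-(2*((j:ℂ))+1)*d₂) := by
    intro j
    rw [hg (2*j+1) (by omega), show 2*j+1-1 = 2*j by omega,
      hXe j, hHo j, he, hH0, hpo j]
    push_cast; ring
  have hXe2 : ∀ j : ℕ, x (2*j+2) = (b₀+b₁+2*b₂*((j:ℂ)+1)) := by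
    intro j; rw [show 2*j+2 = 2*(j+1) by omega, hXe]; push_cast; ring
  have hHe2 : ∀ j : ℕ, h (2*j+2) = a₁+2*a₂*((j:ℂ)+1) := by
    intro j; rw [show 2*j+2 = 2*(j+1) by omega, hHe]; push_cast; ring
  have hGe2 : ∀ j : ℕ, g (2*j+2) = (2*((j:ℂ)+1)*(a₂*(b₀-b₁-(2*((j:ℂ)+1)-1)*b₂)+d₂)) := by
    intro j; rw [show 2*j+2 = 2*(j+1) by omega, hGe]; push_cast; ring
  have hHo3 : ∀ j : ℕ, h (2*j+3) = -(a₁+(2*((j:ℂ)+1)+1)*a₂) := by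
    intro j; rw [show 2*j+3 = 2*(j+1)+1 by omega, hHo]; push_cast; ring
  have hGo3 : ∀ j : ℕ, g (2*j+3) = (-(b₀+b₁+2*b₂*((j:ℂ)+1))*(2*a₁+(2*((j:ℂ)+1)+1)*a₂)-2*d₁-(2*((j:ℂ)+1)+1)*d₂) := by
    intro j; rw [show 2*j+3 = 2*(j+1)+1 by omega, hGo]; push_cast; ring
  have hterm : ∀ j : ℕ, g (2*j) / (h (2*j+1-2) - h (2*j+1)) = (2*((j:ℂ))*(a₂*(b₀-b₁-(2*((j:ℂ))-1)*b₂)+d₂))/(2*a₂) := by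
    intro j
    match j with
    | 0 =>
      rw [show 2*0 = 0 by omega, hg0, zero_div]
      push_cast; ring
    | Nat.succ i =>
      rw [show 2*(i+1)+1-2 = 2*i+1 by omega, hHo i, hHo (i+1), hGe (i+1)]
      push_cast; ring
  have hBo : ∀ j : ℕ, betaCoeff x h g (2*j+1) = ((b₀-b₁-(2*((j:ℂ))+1)*b₂)+(2*(((j:ℂ))+1)*(a₂*(b₀-b₁-(2*(((j:ℂ))+1)-1)*b₂)+d₂))/(-(2*a₁+(4*((j:ℂ))+3)*a₂))-(-(b₀+b₁+2*b₂*((j:ℂ)))*(2*a₁+(2*((j:ℂ))+1)*a₂)-2*d₁-(2*((j:ℂ))+1)*d₂)/(2*a₁+(4*((j:ℂ))+1)*a₂)) := by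
    intro j
    rw [betaCoeff, show 2*j+1-1 = 2*j by omega, show 2*j+1+1 = 2*j+2 by omega,
      hXo j, hGe2 j, hGo j, hHo j, hHe2 j, hHe j]
    ring
  have hBe : ∀ j : ℕ, betaCoeff x h g (2*j+2) = ((b₀+b₁+2*b₂*(((j:ℂ))+1))+(-(b₀+b₁+2*b₂*(((j:ℂ))+1))*(2*a₁+(2*(((j:ℂ))+1)+1)*a₂)-2*d₁-(2*(((j:ℂ))+1)+1)*d₂)/(2*a₁+(4*((j:ℂ))+5)*a₂)-(2*(((j:ℂ))+1)*(a₂*(b₀-b₁-(2*(((j:ℂ))+1)-1)*b₂)+d₂))/(-(2*a₁+(4*((j:ℂ))+3)*a₂))) := by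
    intro j
    rw [betaCoeff, show 2*j+2-1 = 2*j+1 by omega, show 2*j+2+1 = 2*j+3 by omega,
      hXe2 j, hGo3 j, hGe2 j, hHe2 j, hHo3 j, hHo j]
    ring
  have hAo : ∀ j : ℕ, alphaCoeff x h g (2*j+1) = ((-(b₀+b₁+2*b₂*((j:ℂ)))*(2*a₁+(2*((j:ℂ))+1)*a₂)-2*d₁-(2*((j:ℂ))+1)*d₂)/(2*a₁+(4*((j:ℂ))+1)*a₂)*((2*((j:ℂ))*(a₂*(b₀-b₁-(2*((j:ℂ))-1)*b₂)+d₂))/(2*a₂)-(-(b₀+b₁+2*b₂*((j:ℂ)))*(2*a₁+(2*((j:ℂ))+1)*a₂)-2*d₁-(2*((j:ℂ))+1)*d₂)/(2*a₁+(4*((j:ℂ))+1)*a₂)+(2*(((j:ℂ))+1)*(a₂*(b₀-b₁-(2*(((j:ℂ))+1)-1)*b₂)+d₂))/(-(2*a₂))+(b₀-b₁-(2*((j:ℂ))+1)*b₂)-(b₀+b₁+2*b₂*((j:ℂ))))) := by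
    intro j
    rw [alphaCoeff, show 2*j+1-1 = 2*j by omega, show 2*j+1+1 = 2*j+2 by omega,
      hterm j, hGo j, hGe2 j, hXo j, hXe j, hHo j, hHe2 j, hHe j]
    ring
  have hAe : ∀ j : ℕ, alphaCoeff x h g (2*j+2) = ((2*(((j:ℂ))+1)*(a₂*(b₀-b₁-(2*(((j:ℂ))+1)-1)*b₂)+d₂))/(-(2*a₁+(4*((j:ℂ))+3)*a₂))*((-(b₀+b₁+2*b₂*((j:ℂ)))*(2*a₁+(2*((j:ℂ))+1)*a₂)-2*d₁-(2*((j:ℂ))+1)*d₂)/(-(2*a₂))-(2*(((j:ℂ))+1)*(a₂*(b₀-b₁-(2*(((j:ℂ))+1)-1)*b₂)+d₂))/(-(2*a₁+(4*((j:ℂ))+3)*a₂))+(-(b₀+b₁+2*b₂*(((j:ℂ))+1))*(2*a₁+(2*(((j:ℂ))+1)+1)*a₂)-2*d₁-(2*(((j:ℂ))+1)+1)*d₂)/(2*a₂)+(b₀+b₁+2*b₂*(((j:ℂ))+1))-(b₀-b₁-(2*((j:ℂ))+1)*b₂))) := by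
    intro j
    rw [alphaCoeff, show 2*j+2-1 = 2*j+1 by omega, show 2*j+2-2 = 2*j by omega,
      show 2*j+2+1 = 2*j+3 by omega,
      hGe2 j, hGo j, hGo3 j, hXe2 j, hXo j, hHo j, hHe2 j, hHo3 j, hHe j]
    ring
  have hIdA : ∀ j : ℕ, ((-(b₀+b₁+2*b₂*((j:ℂ)))*(2*a₁+(2*((j:ℂ))+1)*a₂)-2*d₁-(2*((j:ℂ))+1)*d₂)/(2*a₁+(4*((j:ℂ))+1)*a₂)*((2*((j:ℂ))*(a₂*(b₀-b₁-(2*((j:ℂ))-1)*b₂)+d₂))/(2*a₂)-(-(b₀+b₁+2*b₂*((j:ℂ)))*(2*a₁+(2*((j:ℂ))+1)*a₂)-2*d₁-(2*((j:ℂ))+1)*d₂)/(2*a₁+(4*((j:ℂ))+1)*a₂)+(2*(((j:ℂ))+1)*(a₂*(b₀-b₁-(2*(((j:ℂ))+1)-1)*b₂)+d₂))/(-(2*a₂))+(b₀-b₁-(2*((j:ℂ))+1)*b₂)-(b₀+b₁+2*b₂*((j:ℂ))))) =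
      (((b₀-b₁-(2*((j:ℂ))+1)*b₂)+(2*(((j:ℂ))+1)*(a₂*(b₀-b₁-(2*(((j:ℂ))+1)-1)*b₂)+d₂))/(-(2*a₁+(4*((j:ℂ))+3)*a₂))-(-(b₀+b₁+2*b₂*((j:ℂ)))*(2*a₁+(2*((j:ℂ))+1)*a₂)-2*d₁-(2*((j:ℂ))+1)*d₂)/(2*a₁+(4*((j:ℂ))+1)*a₂)) - w - ((2*a₁*(d₂+a₂*b₀-a₂*b₁)+(a₂*d₂-2*a₁*a₂*b₂+a₂^2*(b₀-b₁))*(2*((j:ℂ))+1)-a₂^2*b₂*(2*((j:ℂ))+1)^2)/(a₂*(2*a₁+(4*((j:ℂ))+3)*a₂)))) * (((2*a₁*d₂-2*a₂*d₁)+(a₂*d₂-2*a₁*a₂*b₂+a₂^2*(b₀+b₁-b₂))*(2*((j:ℂ)))-a₂^2*b₂*(2*((j:ℂ)))^2)/(a₂*(2*a₁+(4*((j:ℂ))+1)*a₂))) := by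
    intro j
    have h1 := hP1 j
    have h3 := hP3 j
    have hn3 : -(2*a₁+(4*((j:ℂ))+3)*a₂) ≠ 0 := neg_ne_zero.mpr h3
    rw [hw]
    rw [div_sub_div _ _ h2a h1]
    rw [div_add_div _ _ (mul_ne_zero h2a h1) hn2a]
    rw [div_add' _ _ _ (mul_ne_zero (mul_ne_zero h2a h1) hn2a)]
    rw [div_sub' (mul_ne_zero (mul_ne_zero h2a h1) hn2a)]
    rw [div_mul_div_comm]
    rw [add_div' _ _ _ hn3]
    rw [div_sub_div _ _ hn3 h1]
    rw [div_sub_div _ _ (mul_ne_zero hn3 h1) ha]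
    rw [div_sub_div _ _ (mul_ne_zero (mul_ne_zero hn3 h1) ha) (mul_ne_zero ha h3)]
    rw [div_mul_div_comm]
    rw [div_eq_div_iff (mul_ne_zero h1 (mul_ne_zero (mul_ne_zero h2a h1) hn2a))
      (mul_ne_zero (mul_ne_zero (mul_ne_zero (mul_ne_zero hn3 h1) ha) (mul_ne_zero ha h3))
        (mul_ne_zero ha h1))]
    ring
  have hIdB : ∀ j : ℕ, ((2*(((j:ℂ))+1)*(a₂*(b₀-b₁-(2*(((j:ℂ))+1)-1)*b₂)+d₂))/(-(2*a₁+(4*((j:ℂ))+3)*a₂))*((-(b₀+b₁+2*b₂*((j:ℂ)))*(2*a₁+(2*((j:ℂ))+1)*a₂)-2*d₁-(2*((j:ℂ))+1)*d₂)/(-(2*a₂))-(2*(((j:ℂ))+1)*(a₂*(b₀-b₁-(2*(((j:ℂ))+1)-1)*b₂)+d₂))/(-(2*a₁+(4*((j:ℂ))+3)*a₂))+(-(b₀+b₁+2*b₂*(((j:ℂ))+1))*(2*a₁+(2*(((j:ℂ))+1)+1)*a₂)-2*d₁-(2*(((j:ℂ))+1)+1)*d₂)/(2*a₂)+(b₀+b₁+2*b₂*(((j:ℂ))+1))-(b₀-b₁-(2*((j:ℂ))+1)*b₂)))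 =
      (((b₀+b₁+2*b₂*(((j:ℂ))+1))+(-(b₀+b₁+2*b₂*(((j:ℂ))+1))*(2*a₁+(2*(((j:ℂ))+1)+1)*a₂)-2*d₁-(2*(((j:ℂ))+1)+1)*d₂)/(2*a₁+(4*((j:ℂ))+5)*a₂)-(2*(((j:ℂ))+1)*(a₂*(b₀-b₁-(2*(((j:ℂ))+1)-1)*b₂)+d₂))/(-(2*a₁+(4*((j:ℂ))+3)*a₂))) - w - (((2*a₁*d₂-2*a₂*d₁)+(a₂*d₂-2*a₁*a₂*b₂+a₂^2*(b₀+b₁-b₂))*(2*(((j:ℂ))+1))-a₂^2*b₂*(2*(((j:ℂ))+1))^2)/(a₂*(2*a₁+(4*(((j:ℂ))+1)+1)*a₂)))) * ((2*a₁*(d₂+a₂*b₀-a₂*b₁)+(a₂*d₂-2*a₁*a₂*b₂+a₂^2*(b₀-b₁))*(2*((j:ℂ))+1)-a₂^2*b₂*(2*((j:ℂ))+1)^2)/(a₂*(2*a₁+(4*((j:ℂ))+3)*a₂))) := by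
    intro j
    have h3 := hP3 j
    have h5 := hP5 j
    have hn3 : -(2*a₁+(4*((j:ℂ))+3)*a₂) ≠ 0 := neg_ne_zero.mpr h3
    have h15 : (2*a₁+(4*(((j:ℂ))+1)+1)*a₂) ≠ 0 := by
      intro hc; exact hP5 j (by linear_combination hc)
    rw [hw]
    rw [div_sub_div _ _ hn2a hn3]
    rw [div_add_div _ _ (mul_ne_zero hn2a hn3) h2a]
    rw [div_add' _ _ _ (mul_ne_zero (mul_ne_zero hn2a hn3) h2a)]
    rw [div_sub' (mul_ne_zero (mul_ne_zero hn2a hn3) h2a)]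
    rw [div_mul_div_comm]
    rw [add_div' _ _ _ h5]
    rw [div_sub_div _ _ h5 hn3]
    rw [div_sub_div _ _ (mul_ne_zero h5 hn3) ha]
    rw [div_sub_div _ _ (mul_ne_zero (mul_ne_zero h5 hn3) ha) (mul_ne_zero ha h15)]
    rw [div_mul_div_comm]
    rw [div_eq_div_iff (mul_ne_zero hn3 (mul_ne_zero (mul_ne_zero hn2a hn3) h2a))
      (mul_ne_zero (mul_ne_zero (mul_ne_zero (mul_ne_zero h5 hn3) ha) (mul_ne_zero ha h15))
        (mul_ne_zero ha h3))]
    ring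
  have stepOdd : ∀ j : ℕ, z (2*j) = (((2*a₁*d₂-2*a₂*d₁)+(a₂*d₂-2*a₁*a₂*b₂+a₂^2*(b₀+b₁-b₂))*(2*((j:ℂ)))-a₂^2*b₂*(2*((j:ℂ)))^2)/(a₂*(2*a₁+(4*((j:ℂ))+1)*a₂))) → z (2*j+1) = ((2*a₁*(d₂+a₂*b₀-a₂*b₁)+(a₂*d₂-2*a₁*a₂*b₂+a₂^2*(b₀-b₁))*(2*((j:ℂ))+1)-a₂^2*b₂*(2*((j:ℂ))+1)^2)/(a₂*(2*a₁+(4*((j:ℂ))+3)*a₂))) := by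
    intro j hzj
    have hZe : (((2*a₁*d₂-2*a₂*d₁)+(a₂*d₂-2*a₁*a₂*b₂+a₂^2*(b₀+b₁-b₂))*(2*((j:ℂ)))-a₂^2*b₂*(2*((j:ℂ)))^2)/(a₂*(2*a₁+(4*((j:ℂ))+1)*a₂))) ≠ 0 := hzj ▸ hznz (2*j)
    rw [hz (2*j), hy (2*j), hzj, hAo j, hIdA j, mul_div_cancel_right₀ _ hZe, hBo j]
    ring
  have stepEven : ∀ j : ℕ, z (2*j+1) = ((2*a₁*(d₂+a₂*b₀-a₂*b₁)+(a₂*d₂-2*a₁*a₂*b₂+a₂^2*(b₀-b₁))*(2*((j:ℂ))+1)-a₂^2*b₂*(2*((j:ℂ))+1)^2)/(a₂*(2*a₁+(4*((j:ℂ))+3)*a₂))) → z (2*j+2) = (((2*a₁*d₂-2*a₂*d₁)+(a₂*d₂-2*a₁*a₂*b₂+a₂^2*(b₀+b₁-b₂))*(2*(((j:ℂ))+1))-a₂^2*b₂*(2*(((j:ℂ))+1))^2)/(a₂*(2*a₁+(4*(((j:ℂ))+1)+1)*a₂))) := by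
    intro j hzj
    have hZo : ((2*a₁*(d₂+a₂*b₀-a₂*b₁)+(a₂*d₂-2*a₁*a₂*b₂+a₂^2*(b₀-b₁))*(2*((j:ℂ))+1)-a₂^2*b₂*(2*((j:ℂ))+1)^2)/(a₂*(2*a₁+(4*((j:ℂ))+3)*a₂))) ≠ 0 := hzj ▸ hznz (2*j+1)
    have h1 := hz (2*j+1)
    rw [show 2*j+1+1 = 2*j+2 by omega] at h1
    rw [h1, hy (2*j+1), hzj, hAe j, hIdB j, mul_div_cancel_right₀ _ hZo, hBe j]
    ring
  have main : ∀ j : ℕ, z (2*j) = (((2*a₁*d₂-2*a₂*d₁)+(a₂*d₂-2*a₁*a₂*b₂+a₂^2*(b₀+b₁-b₂))*(2*((j:ℂ)))-a₂^2*b₂*(2*((j:ℂ)))^2)/(a₂*(2*a₁+(4*((j:ℂ))+1)*a₂))) ∧ z (2*j+1) = ((2*a₁*(d₂+a₂*b₀-a₂*b₁)+(a₂*d₂-2*a₁*a₂*b₂+a₂^2*(b₀-b₁))*(2*((j:ℂ))+1)-a₂^2*b₂*(2*((j:ℂ))+1)^2)/(a₂*(2*a₁+(4*((j:ℂ))+3)*a₂)))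 := by
    intro j
    induction j with
    | zero =>
      have hh1 : h 1 = -(a₁+a₂) := by rw [hh]; push_cast; ring
      have hg1 : g 1 = -(b₀+b₁)*(2*a₁+a₂)-2*d₁-d₂ := by
        rw [hg 1 le_rfl, show (1:ℕ)-1 = 0 by omega, hX0, hh1, hH0, he]
        push_cast; ring
      have hb0c : z 0 = (2*a₁*d₂-2*a₂*d₁)/(a₂*(2*a₁+a₂)) := by
        rw [hz0, betaCoeff, show (0:ℕ)-1 = 0 by omega, hg0, zero_div, sub_zero,
          show (0:ℕ)+1 = 1 by omega, hg1, hH0, hh1, hX0, hw,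
          show a₁ - -(a₁+a₂) = 2*a₁+a₂ by ring]
        rw [add_div' _ _ _ h1a, div_sub_div _ _ h1a ha,
          div_eq_div_iff (mul_ne_zero h1a ha) (mul_ne_zero ha h1a)]
        ring
      have hd0 : 2*a₁+(4*((0:ℕ):ℂ)+1)*a₂ ≠ 0 := by
        intro hc; exact h1a (by push_cast at hc; linear_combination hc)
      have hb0 : z (2*0) = (((2*a₁*d₂-2*a₂*d₁)+(a₂*d₂-2*a₁*a₂*b₂+a₂^2*(b₀+b₁-b₂))*(2*(((0:ℕ):ℂ)))-a₂^2*b₂*(2*(((0:ℕ):ℂ)))^2)/(a₂*(2*a₁+(4*(((0:ℕ):ℂ))+1)*a₂))) := by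
        rw [show (2*0:ℕ) = 0 by omega, hb0c,
          div_eq_div_iff (mul_ne_zero ha h1a) (mul_ne_zero ha hd0)]
        push_cast; ring
      exact ⟨hb0, stepOdd 0 hb0⟩
    | succ i ih =>
      have h15 : 2*a₁+(4*((i:ℂ)+1)+1)*a₂ ≠ 0 := by
        intro hc; exact hP5 i (by linear_combination hc)
      have hdi : 2*a₁+(4*(((i+1:ℕ)):ℂ)+1)*a₂ ≠ 0 := by
        intro hc; exact hP5 i (by push_cast at hc; linear_combination hc)
      have he2 : z (2*(i+1)) = (((2*a₁*d₂-2*a₂*d₁)+(a₂*d₂-2*a₁*a₂*b₂+a₂^2*(b₀+b₁-b₂))*(2*(((i+1:ℕ):ℂ)))-a₂^2*b₂*(2*(((i+1:ℕ):ℂ)))^2)/(a₂*(2*a₁+(4*(((i+1:ℕ):ℂ))+1)*a₂))) := by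
        rw [show 2*(i+1) = 2*i+2 by omega, stepEven i ih.2,
          div_eq_div_iff (mul_ne_zero ha h15) (mul_ne_zero ha hdi)]
        push_cast; ring
      exact ⟨he2, stepOdd (i+1) he2⟩
  refine ⟨?_, ?_⟩
  · intro k hk
    obtain ⟨j, hj⟩ := hk
    have hk2 : k = 2*j := by omega
    subst hk2
    have h1 := hP1 j
    have h3 := hP3 j
    have hn3 : -(2*a₁+(4*((j:ℂ))+3)*a₂) ≠ 0 := neg_ne_zero.mpr h3
    have hym : y (2*j+1) = betaCoeff x h g (2*j+1) - w - z (2*j+1) := by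
      linear_combination hz (2*j)
    rw [hym, (main j).1, (main j).2, hBo j]
    rw [add_div' _ _ _ hn3]
    rw [div_sub_div _ _ hn3 h1]
    rw [div_sub' (mul_ne_zero hn3 h1)]
    rw [div_sub_div _ _ (mul_ne_zero hn3 h1) (mul_ne_zero ha h3)]
    rw [div_add_div _ _ (mul_ne_zero (mul_ne_zero hn3 h1) (mul_ne_zero ha h3)) (mul_ne_zero ha h1)]
    rw [div_add' _ _ _ (mul_ne_zero (mul_ne_zero (mul_ne_zero hn3 h1) (mul_ne_zero ha h3)) (mul_ne_zero ha h1))]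
    rw [div_eq_iff (mul_ne_zero (mul_ne_zero (mul_ne_zero hn3 h1) (mul_ne_zero ha h3)) (mul_ne_zero ha h1))]
    ring
  · intro k hk
    obtain ⟨j, hj⟩ := hk
    subst hj
    have h1 := hP1 j
    have h3 := hP3 j
    have h5 := hP5 j
    have hn3 : -(2*a₁+(4*((j:ℂ))+3)*a₂) ≠ 0 := neg_ne_zero.mpr h3
    have h15 : (2*a₁+(4*(((j:ℂ))+1)+1)*a₂) ≠ 0 := by
      intro hc; exact hP5 j (by linear_combination hc)
    have hA := hz (2*j+1)
    rw [show 2*j+1+1 = 2*j+2 by omega] at hA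
    have hym : y (2*j+2) = betaCoeff x h g (2*j+2) - w - z (2*j+2) := by
      linear_combination hA
    have hdi : 2*a₁+(4*(((j+1:ℕ)):ℂ)+1)*a₂ ≠ 0 := by
      intro hc; exact hP5 j (by push_cast at hc; linear_combination hc)
    have hz2 : z (2*j+2) = (((2*a₁*d₂-2*a₂*d₁)+(a₂*d₂-2*a₁*a₂*b₂+a₂^2*(b₀+b₁-b₂))*(2*(((j:ℂ))+1))-a₂^2*b₂*(2*(((j:ℂ))+1))^2)/(a₂*(2*a₁+(4*(((j:ℂ))+1)+1)*a₂))) := by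
      rw [show 2*j+2 = 2*(j+1) by omega, (main (j+1)).1,
        div_eq_div_iff (mul_ne_zero ha hdi) (mul_ne_zero ha h15)]
      push_cast; ring
    rw [show 2*j+1+1 = 2*j+2 by omega, hym, hz2, (main j).2, hBe j]
    rw [add_div' _ _ _ h5]
    rw [div_sub_div _ _ h5 hn3]
    rw [div_sub' (mul_ne_zero h5 hn3)]
    rw [div_sub_div _ _ (mul_ne_zero h5 hn3) (mul_ne_zero ha h15)]
    rw [div_add_div _ _ (mul_ne_zero (mul_ne_zero h5 hn3) (mul_ne_zero ha h15)) (mul_ne_zero ha h3)]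
    rw [div_add' _ _ _ (mul_ne_zero (mul_ne_zero (mul_ne_zero h5 hn3) (mul_ne_zero ha h15)) (mul_ne_zero ha h3))]
    rw [div_eq_iff (mul_ne_zero (mul_ne_zero (mul_ne_zero h5 hn3) (mul_ne_zero ha h15)) (mul_ne_zero ha h3))]
    ring
end

section
/- Let β : ℕ → ℂ, α : ℕ → ℂ (with α_n defined for n ≥ 1), and w ∈ ℂ. Define monic polynomials u_n ∈ ℂ[t] by u₀ = 1, u₁ = t − β₀, and u_{n+1} = (t − β_n)u_n − α_n u_{n−1} for n ≥ 1. Suppose y, z : ℕ → ℂ satisfy y₀ = 0, β_k = y_k + z_k + w for all k ≥ 0, and α_{k+1} = y_{k+1} z_k for all k ≥ 0. Define ũ_n ∈ ℂ[t] by ũ₀ = 1 and ũ_n = u_n − y_n ũ_{n−1} for n ≥ 1. Then ũ₁ = t − (y₁ + z₀ + w), and for all n ≥ 1, ũ_{n+1} = (t − (y_{n+1} + z_n + w))ũ_n − y_n z_n ũ_{n−1}. In other words, the Darboux transform with shift w of the monic Jacobi matrix of (u_n), namely M = (X + Z)(I + YS) + wI with entries M_{k,k} = y_{k+1} + z_k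 + w and M_{k+1,k} = y_{k+1}z_{k+1}, is the monic Jacobi matrix of the sequence (ũ_n). -/
open Polynomial

/-- if `L − wI = (I + YS)(X + Z)` is the LU factorization of the monic
Jacobi matrix of `(u_n)`, then the polynomials `ũ_n = u_n − y_n ũ_{n−1}` satisfy the
three-term recurrence given by the Darboux transform `M = (X + Z)(I + YS) + wI`,
i.e. with diagonal entries `y_{k+1} + z_k + w` and subdiagonal entries `y_k z_k`. -/
theorem darboux_transform_three_term_recurrence
    (β α : ℕ → ℂ) (w : ℂ)
    (u : ℕ → Polynomial ℂ)
    (hu0 : u 0 = 1) (hu1 : u 1 = X - C (β 0))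
    (hu : ∀ n : ℕ, 1 ≤ n → u (n + 1) = (X - C (β n)) * u n - C (α n) * u (n - 1))
    (y z : ℕ → ℂ)
    (hy0 : y 0 = 0)
    (hβ : ∀ k : ℕ, β k = y k + z k + w)
    (hα : ∀ k : ℕ, α (k + 1) = y (k + 1) * z k)
    (ut : ℕ → Polynomial ℂ)
    (hut0 : ut 0 = 1)
    (hut : ∀ n : ℕ, 1 ≤ n → ut n = u n - C (y n) * ut (n - 1)) :
    ut 1 = X - C (y 1 + z 0 + w) ∧
    ∀ n : ℕ, 1 ≤ n →
      ut (n + 1) = (X - C (y (n + 1) + z n + w)) * ut n - C (y n * z n) * ut (n - 1) := by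
  have hut' : ∀ m : ℕ, ut (m + 1) = u (m + 1) - C (y (m + 1)) * ut m := by
    intro m
    simpa using hut (m + 1) (by omega)
  have hu' : ∀ m : ℕ,
      u (m + 2) = (X - C (β (m + 1))) * u (m + 1) - C (α (m + 1)) * u m := by
    intro m
    simpa using hu (m + 1) (by omega)
  -- key lemma: (X - w) ut m = u (m+1) + z m * u m
  have hC : ∀ m : ℕ, (X - C w) * ut m = u (m + 1) + C (z m) * u m := by
    intro m
    induction m with
    | zero =>
      rw [hut0, hu0, hu1, hβ 0, hy0]
      simp only [C_add, C_mul, C_0]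
      ring
    | succ k ih =>
      have h1 := hut' k
      have h2 := hu' k
      rw [hα k, hβ (k + 1)] at h2
      simp only [C_add, C_mul] at h2 ⊢
      linear_combination -h2 + (X - C w) * h1 - C (y (k + 1)) * ih
  constructor
  · rw [hut' 0, hu1, hut0, hβ 0, hy0]
    simp only [C_add, C_mul, C_0]
    ring
  · intro n hn
    obtain ⟨m, rfl⟩ := Nat.exists_eq_add_of_le hn
    simp only [Nat.add_comm 1 m, Nat.add_sub_cancel]
    have h1 := hut' (m + 1)
    rw [hu' m, hα m, hβ (m + 1)] at h1
    have h3 := hC m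
    have h4 := hut' m
    simp only [C_add, C_mul] at h1 ⊢
    linear_combination h1 + C (y (m + 1)) * h3 - (X - C (z (m + 1)) - C w) * h4
end

section
/- Fix a₁, b₁, d₁, d₂ ∈ ℂ and set h_k = (a₁ + k)(−1)^k, x_k = (b₁ + k)(−1)^k, e_k = −d₁ + (d₁ + k d₂)(−1)^k, g₀ = 0, g_k = x_{k−1}(h_k − h₀) + e_k for k ≥ 1. On the ℂ-vector space of sequences f : ℕ → ℂ define linear operators B₁ and B₂ by (B₁ f)(0) = h₀ f(0), (B₁ f)(k) = h_k f(k) + g_k f(k−1) for k ≥ 1, and (B₂ f)(k) = x_k f(k) + f(k+1) for k ≥ 0, and set B₃ = B₁∘B₂ + B₂∘B₁ − (a₁ − b₁ − 2d₁ + 1/2)·id. Then B₂∘B₃ + B₃∘B₂ = B₁ + (2d₁ + d₂(1 − 2b₁) − a₁)·id. -/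
/-- the Bannai–Ito relation `{B₂, B₃} = B₁ + w₁·id` with
`w₁ = 2d₁ + d₂(1 − 2b₁) − a₁` for the operators `B₁`, `B₂`, `B₃` on sequences. -/
theorem bannai_ito_relation_B2_B3
    (a₁ b₁ d₁ d₂ : ℂ) (h x e g : ℕ → ℂ)
    (hh : ∀ k : ℕ, h k = (a₁ + k) * (-1) ^ k)
    (hx : ∀ k : ℕ, x k = (b₁ + k) * (-1) ^ k)
    (he : ∀ k : ℕ, e k = -d₁ + (d₁ + k * d₂) * (-1) ^ k)
    (hg0 : g 0 = 0)
    (hg : ∀ k : ℕ, 1 ≤ k → g k = x (k - 1) * (h k - h 0) + e k)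
    (B₁ B₂ B₃ : (ℕ → ℂ) → (ℕ → ℂ))
    (hB₁0 : ∀ f : ℕ → ℂ, B₁ f 0 = h 0 * f 0)
    (hB₁ : ∀ (f : ℕ → ℂ) (k : ℕ), 1 ≤ k → B₁ f k = h k * f k + g k * f (k - 1))
    (hB₂ : ∀ (f : ℕ → ℂ) (k : ℕ), B₂ f k = x k * f k + f (k + 1))
    (hB₃ : ∀ f : ℕ → ℂ, B₃ f = B₁ (B₂ f) + B₂ (B₁ f) - (a₁ - b₁ - 2 * d₁ + 1 / 2) • f) :
    ∀ f : ℕ → ℂ, B₂ (B₃ f) + B₃ (B₂ f) = B₁ f + (2 * d₁ + d₂ * (1 - 2 * b₁) - a₁) • f := by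
  have hB₁s : ∀ (u : ℕ → ℂ) (m : ℕ), B₁ u (m+1) = h (m+1) * u (m+1) + g (m+1) * u m := by
    intro u m
    rw [hB₁ u (m+1) (Nat.le_add_left 1 m)]; simp
  have hgs : ∀ m : ℕ, g (m+1) = x m * (h (m+1) - h 0) + e (m+1) := by
    intro m
    rw [hg (m+1) (Nat.le_add_left 1 m)]; simp
  have h1 : ∀ u : ℕ → ℂ, B₁ u 1 = h 1 * u 1 + g 1 * u 0 := fun u => hB₁s u 0
  have h2 : ∀ u : ℕ → ℂ, B₁ u 2 = h 2 * u 2 + g 2 * u 1 := fun u => hB₁s u 1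
  have hg1 : g 1 = x 0 * (h 1 - h 0) + e 1 := hgs 0
  have hg2 : g 2 = x 1 * (h 2 - h 0) + e 2 := hgs 1
  have hB3' : ∀ (u : ℕ → ℂ) (k : ℕ), B₃ u k =
      B₁ (B₂ u) k + B₂ (B₁ u) k - (a₁ - b₁ - 2*d₁ + 1/2) * u k := by
    intro u k; rw [hB₃]; simp
  intro f
  funext k
  simp only [Pi.add_apply, Pi.smul_apply, smul_eq_mul]
  cases k with
  | zero =>
    simp only [hB₂, hB3', hB₁0, h1, h2, hg1, hg2, hh, hx, he]
    push_cast
    norm_num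
    ring
  | succ n =>
    simp only [hB₂, hB3', hB₁s, hgs, hh, hx, he]
    push_cast
    simp only [pow_succ, pow_zero]
    rcases Nat.even_or_odd n with hn | hn
    · rw [hn.neg_one_pow]; ring
    · rw [hn.neg_one_pow]; ring
end

section
/- Fix a₁, b₁, d₁, d₂ ∈ ℂ and set h_k = (a₁ + k)(−1)^k, x_k = (b₁ + k)(−1)^k, e_k = −d₁ + (d₁ + k d₂)(−1)^k, g₀ = 0, g_k = x_{k−1}(h_k − h₀) + e_k for k ≥ 1. On the ℂ-vector space of sequences f : ℕ → ℂ define linear operators B₁ and B₂ by (B₁ f)(0) = h₀ f(0), (B₁ f)(k) = h_k f(k) + g_k f(k−1) for k ≥ 1, and (B₂ f)(k) = x_k f(k) + f(k+1) for k ≥ 0, and set B₃ = B₁∘B₂ + B₂∘B₁ − (a₁ − b₁ − 2d₁ + 1/2)·id. Then B₃∘B₁ + B₁∘B₃ = B₂ + (2d₁ + d₂(1 − 2a₁) + a₁(2b₁ − 2a₁ − 1))·id. -/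
set_option maxHeartbeats 1000000

/-- the Bannai–Ito relation `{B₃, B₁} = B₂ + w₂·id` with
`w₂ = 2d₁ + d₂(1 − 2a₁) + a₁(2b₁ − 2a₁ − 1)` for the operators `B₁`, `B₂`, `B₃` on sequences. -/
theorem bannai_ito_relation_B3_B1
    (a₁ b₁ d₁ d₂ : ℂ) (h x e g : ℕ → ℂ)
    (hh : ∀ k : ℕ, h k = (a₁ + k) * (-1) ^ k)
    (hx : ∀ k : ℕ, x k = (b₁ + k) * (-1) ^ k)
    (he : ∀ k : ℕ, e k = -d₁ + (d₁ + k * d₂) * (-1) ^ k)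
    (hg0 : g 0 = 0)
    (hg : ∀ k : ℕ, 1 ≤ k → g k = x (k - 1) * (h k - h 0) + e k)
    (B₁ B₂ B₃ : (ℕ → ℂ) → (ℕ → ℂ))
    (hB₁0 : ∀ f : ℕ → ℂ, B₁ f 0 = h 0 * f 0)
    (hB₁ : ∀ (f : ℕ → ℂ) (k : ℕ), 1 ≤ k → B₁ f k = h k * f k + g k * f (k - 1))
    (hB₂ : ∀ (f : ℕ → ℂ) (k : ℕ), B₂ f k = x k * f k + f (k + 1))
    (hB₃ : ∀ f : ℕ → ℂ, B₃ f = B₁ (B₂ f) + B₂ (B₁ f) - (a₁ - b₁ - 2 * d₁ + 1 / 2) • f) :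
    ∀ f : ℕ → ℂ, B₃ (B₁ f) + B₁ (B₃ f) = B₂ f + (2 * d₁ + d₂ * (1 - 2 * a₁) + a₁ * (2 * b₁ - 2 * a₁ - 1)) • f := by
  have hB₁' : ∀ (f : ℕ → ℂ) (k : ℕ), B₁ f k = h k * f k + g k * f (k - 1) := by
    intro f k
    cases k with
    | zero => simp [hB₁0, hg0]
    | succ n => exact hB₁ f (n + 1) (Nat.le_add_left 1 n)
  intro f
  funext k
  match k with
  | 0 =>
    have g1 := hg 1 le_rfl
    simp only [hB₃, Pi.add_apply, Pi.sub_apply, Pi.smul_apply, smul_eq_mul,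
      hB₁', hB₂, Nat.zero_sub, Nat.add_sub_cancel, Nat.sub_self]
    simp only [hg0, g1, hh, hx, he]
    push_cast
    ring
  | 1 =>
    have g1 := hg 1 le_rfl
    have g2 := hg 2 (by norm_num)
    simp only [hB₃, Pi.add_apply, Pi.sub_apply, Pi.smul_apply, smul_eq_mul,
      hB₁', hB₂]
    norm_num
    simp only [hg0, g1, g2, hh, hx, he]
    push_cast
    ring
  | (n + 2) =>
    have g1 := hg (n + 1) (by omega)
    have g2 := hg (n + 2) (by omega)
    have g3 := hg (n + 3) (by omega)
    simp only [hB₃, Pi.add_apply, Pi.sub_apply, Pi.smul_apply, smul_eq_mul,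
      hB₁', hB₂, Nat.add_sub_cancel, show n + 2 - 1 = n + 1 from rfl,
      show n + 1 - 1 = n from rfl, show n + 2 + 1 = n + 3 from rfl,
      show n + 3 - 1 = n + 2 from rfl, show n + 1 + 1 = n + 2 from rfl]
    simp only [g1, g2, g3, hh, hx, he, show n + 1 - 1 = n from rfl,
      show n + 2 - 1 = n + 1 from rfl, show n + 3 - 1 = n + 2 from rfl]
    push_cast
    simp only [pow_succ]
    rcases Nat.even_or_odd n with hn | hn
    · rw [hn.neg_one_pow]; ring
    · rw [hn.neg_one_pow]; ring
end

section
/- Fix a₁, b₁, d₁, d₂ ∈ ℂ and set h_k = (a₁ + k)(−1)^k, x_k = (b₁ + k)(−1)^k, e_k = −d₁ + (d₁ + k d₂)(−1)^k, g₀ = 0, g_k = x_{k−1}(h_k − h₀) + e_k for k ≥ 1. On the ℂ-vector space of sequences f : ℕ → ℂ define linear operators B₁ and B₂ by (B₁ f)(0) = h₀ f(0), (B₁ f)(k) = h_k f(k) + g_k f(k−1) for k ≥ 1, and (B₂ f)(k) = x_k f(k) + f(k+1) for k ≥ 0, and set B₃ = B₁∘B₂ + B₂∘B₁ − (a₁ −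 b₁ − 2d₁ + 1/2)·id. Then the Casimir operator Q = B₁² + B₂² + B₃² is a scalar multiple of the identity: Q = ((a₁ + d₂)² + (a₁ − b₁)(1 + a₁ − b₁) − 2d₁ + 1/4)·id; in particular Q commutes with B₁, B₂ and B₃. -/
set_option maxHeartbeats 2000000 in
/-- the Casimir operator `Q = B₁² + B₂² + B₃²` of the Bannai–Ito
realization is the scalar `(a₁ + d₂)² + (a₁ − b₁)(1 + a₁ − b₁) − 2d₁ + 1/4` times
the identity; in particular it commutes with `B₁`, `B₂` and `B₃`. -/
theorem bannai_ito_casimir_scalar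
    (a₁ b₁ d₁ d₂ : ℂ) (h x e g : ℕ → ℂ)
    (hh : ∀ k : ℕ, h k = (a₁ + k) * (-1) ^ k)
    (hx : ∀ k : ℕ, x k = (b₁ + k) * (-1) ^ k)
    (he : ∀ k : ℕ, e k = -d₁ + (d₁ + k * d₂) * (-1) ^ k)
    (hg0 : g 0 = 0)
    (hg : ∀ k : ℕ, 1 ≤ k → g k = x (k - 1) * (h k - h 0) + e k)
    (B₁ B₂ B₃ Q : (ℕ → ℂ) → (ℕ → ℂ))
    (hB₁0 : ∀ f : ℕ → ℂ, B₁ f 0 = h 0 * f 0)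
    (hB₁ : ∀ (f : ℕ → ℂ) (k : ℕ), 1 ≤ k → B₁ f k = h k * f k + g k * f (k - 1))
    (hB₂ : ∀ (f : ℕ → ℂ) (k : ℕ), B₂ f k = x k * f k + f (k + 1))
    (hB₃ : ∀ f : ℕ → ℂ, B₃ f = B₁ (B₂ f) + B₂ (B₁ f) - (a₁ - b₁ - 2 * d₁ + 1 / 2) • f)
    (hQ : ∀ f : ℕ → ℂ, Q f = B₁ (B₁ f) + B₂ (B₂ f) + B₃ (B₃ f)) :
    (∀ f : ℕ → ℂ,
      Q f = ((a₁ + d₂) ^ 2 + (a₁ - b₁) * (1 + a₁ - b₁) - 2 * d₁ + 1 / 4) • f) ∧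
    (∀ f : ℕ → ℂ, Q (B₁ f) = B₁ (Q f)) ∧
    (∀ f : ℕ → ℂ, Q (B₂ f) = B₂ (Q f)) ∧
    (∀ f : ℕ → ℂ, Q (B₃ f) = B₃ (Q f)) := by
  have hB₁s : ∀ (f : ℕ → ℂ) (k : ℕ), B₁ f (k + 1) = h (k+1) * f (k+1) + g (k+1) * f k := by
    intro f k
    simpa using hB₁ f (k + 1) (by omega)
  have hgs : ∀ k : ℕ, g (k + 1) = x k * (h (k+1) - h 0) + e (k+1) := by
    intro k
    simpa using hg (k + 1) (by omega)
  have key : ∀ f : ℕ → ℂ,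
      Q f = ((a₁ + d₂) ^ 2 + (a₁ - b₁) * (1 + a₁ - b₁) - 2 * d₁ + 1 / 4) • f := by
    intro f
    funext k
    match k with
    | 0 =>
        simp only [hQ, hB₃, Pi.add_apply, Pi.sub_apply, Pi.smul_apply, smul_eq_mul,
          hB₂, hB₁0, hB₁s, hgs, hg0, hh, hx, he]
        push_cast
        ring
    | 1 =>
        simp only [hQ, hB₃, Pi.add_apply, Pi.sub_apply, Pi.smul_apply, smul_eq_mul,
          hB₂, hB₁0, hB₁s, hgs, hg0, hh, hx, he]
        push_cast
        ring
    | (n+2) =>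
        simp only [hQ, hB₃, Pi.add_apply, Pi.sub_apply, Pi.smul_apply, smul_eq_mul,
          hB₂, hB₁s, hgs, hh, hx, he]
        simp only [pow_succ]
        rcases Nat.even_or_odd n with hn | hn
        · rw [hn.neg_one_pow]; push_cast; ring
        · rw [hn.neg_one_pow]; push_cast; ring
  have hB₁sm : ∀ (c : ℂ) (f : ℕ → ℂ), B₁ (c • f) = c • B₁ f := by
    intro c f
    funext k
    match k with
    | 0 => simp only [hB₁0, Pi.smul_apply, smul_eq_mul]; ring
    | (n+1) => simp only [hB₁s, Pi.smul_apply, smul_eq_mul]; ring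
  have hB₂sm : ∀ (c : ℂ) (f : ℕ → ℂ), B₂ (c • f) = c • B₂ f := by
    intro c f
    funext k
    simp only [hB₂, Pi.smul_apply, smul_eq_mul]; ring
  have hB₃sm : ∀ (c : ℂ) (f : ℕ → ℂ), B₃ (c • f) = c • B₃ f := by
    intro c f
    rw [hB₃, hB₃, hB₂sm, hB₁sm, hB₁sm, hB₂sm, smul_comm (a₁ - b₁ - 2 * d₁ + 1 / 2) c,
      ← smul_add, smul_sub]
  refine ⟨key, ?_, ?_, ?_⟩
  · intro f; rw [key, key, hB₁sm]
  · intro f; rw [key, key, hB₂sm]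
  · intro f; rw [key, key, hB₃sm]
end

section
/- Let a₂ ∈ ℂ with a₂ ≠ 0, and set x_k = 0, h_k = a₂(k + 1/2)(−1)^k and g_k = a₂ k(−1)^k for all k ≥ 0 (these arise from the q = −1 parametrization with a₁ = a₂/2, b₀ = b₁ = b₂ = 0, d₁ = 0, d₂ = a₂, for which g_k = x_{k−1}(h_k − h₀) + e_k). Then the recurrence coefficients defined from x, h, g satisfy α_n = 1/4 for every n ≥ 1, β₀ = −1/2, and β_n = 0 for every n ≥ 1. -/
private lemma div_eq_aux (c d r : ℂ) (hd : d ≠ 0) (hc : c = r * d) : c / d = r := by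
  rw [hc, mul_div_assoc, div_self hd, mul_one]

/-- the `−1` polynomial family related to the Chebyshev polynomials of
the first kind: with `x_k = 0`, `h_k = a₂(k + 1/2)(−1)^k`, `g_k = a₂ k (−1)^k`, one has
`α_n = 1/4` for `n ≥ 1`, `β₀ = −1/2`, and `β_n = 0` for `n ≥ 1`. -/
theorem minus_one_chebyshev_like_recurrence_coefficients
    (a₂ : ℂ) (ha : a₂ ≠ 0) (x h g : ℕ → ℂ)
    (hx : ∀ k : ℕ, x k = 0)
    (hh : ∀ k : ℕ, h k = a₂ * ((k : ℂ) + 1 / 2) * (-1) ^ k)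
    (hg : ∀ k : ℕ, g k = a₂ * (k : ℂ) * (-1) ^ k) :
    (∀ n : ℕ, 1 ≤ n → alphaCoeff x h g n = 1 / 4) ∧
    betaCoeff x h g 0 = -(1 / 2) ∧
    (∀ n : ℕ, 1 ≤ n → betaCoeff x h g n = 0) := by
  have hε : ∀ m : ℕ, ((-1 : ℂ)) ^ m ≠ 0 := fun m => pow_ne_zero m (by norm_num)
  have hm1 : ∀ m : ℕ, ((m : ℂ) + 1) ≠ 0 := fun m => Nat.cast_add_one_ne_zero m
  -- ratio R : g (m+1) / (h m - h (m+1)) = -(1/2)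
  have R : ∀ m : ℕ, g (m + 1) / (h m - h (m + 1)) = -(1 / 2) := by
    intro m
    apply div_eq_aux
    · have : h m - h (m + 1) = a₂ * (-1) ^ m * (2 * (m : ℂ) + 2) := by
        rw [hh, hh]; push_cast; ring
      rw [this]
      exact mul_ne_zero (mul_ne_zero ha (hε m)) (by
        have := hm1 m
        intro hcon; apply this; linear_combination hcon / 2)
    · rw [hg, hh, hh]; push_cast; ring
  -- ratio S : g (m+2) / (h m - h (m+2)) = -((m:ℂ)+2)/2
  have S : ∀ m : ℕ, g (m + 2) / (h m - h (m + 2)) = -(((m : ℂ) + 2) / 2) := by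
    intro m
    apply div_eq_aux
    · have : h m - h (m + 2) = a₂ * (-1) ^ m * (-2) := by
        rw [hh, hh]; push_cast; ring
      rw [this]
      exact mul_ne_zero (mul_ne_zero ha (hε m)) (by norm_num)
    · rw [hg, hh, hh]; push_cast; ring
  -- ratio T : g (k+1) / (h k - h (k+2)) = ((k:ℂ)+1)/2
  have T : ∀ k : ℕ, g (k + 1) / (h k - h (k + 2)) = ((k : ℂ) + 1) / 2 := by
    intro k
    apply div_eq_aux
    · have : h k - h (k + 2) = a₂ * (-1) ^ k * (-2) := by
        rw [hh, hh]; push_cast; ring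
      rw [this]
      exact mul_ne_zero (mul_ne_zero ha (hε k)) (by norm_num)
    · rw [hg, hh, hh]; push_cast; ring
  have hg0 : g 0 = 0 := by rw [hg]; simp
  refine ⟨?_, ?_, ?_⟩
  · intro n hn
    match n, hn with
    | 1, _ =>
      simp only [alphaCoeff]
      norm_num [hx, hg0, R 0, S 0]
    | (k+2), _ =>
      simp only [alphaCoeff]
      have e2 : k + 2 - 1 = k + 1 := rfl
      have e3 : k + 2 - 2 = k := rfl
      have e4 : k + 2 + 1 = k + 3 := rfl
      rw [e2, e3, e4]
      have hA := T k
      have hB := S (k + 1)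
      have hC := R (k + 1)
      have hC' : g (k + 2) / (h (k + 1) - h (k + 2)) = -(1/2) := hC
      have hB' : g (k + 3) / (h (k + 1) - h (k + 3)) = -(((k : ℂ) + 1 + 2) / 2) := by
        have := S (k + 1); push_cast at this ⊢; convert this using 3
      rw [hx, hx]
      rw [hC', hB']
      have hA' : g (k + 1) / (h k - h (k + 2)) = ((k : ℂ) + 1) / 2 := hA
      rw [hA']
      push_cast; ring
  · simp only [betaCoeff, Nat.zero_sub]
    rw [hx, hg0, R 0]
    norm_num
  · intro n hn
    obtain ⟨m, rfl⟩ := Nat.exists_eq_add_of_le hn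
    have e1 : 1 + m = m + 1 := by ring
    rw [e1]
    simp only [betaCoeff, Nat.add_sub_cancel]
    rw [hx, R m, R (m + 1)]
    ring
end

section
/- Let T_k ∈ ℝ[t] denote the Chebyshev polynomials of the first kind (T_k(cos θ) = cos kθ), and let T̃_k denote the monic Chebyshev polynomials of the first kind: T̃₀ = 1 and T̃_k = 2^{1−k} T_k for k ≥ 1. Define monic polynomials u_n ∈ ℝ[t] by u₀ = 1, u₁ = t + 1/2, and u_{n+1} = t·u_n − (1/4)·u_{n−1} for n ≥ 1 (i.e., the monic orthogonal polynomials with recurrence coefficients α_n = 1/4 for n ≥ 1, β₀ = −1/2, β_n = 0 for n ≥ 1). Then for every n ≥ 0, u_n = Σ_{k=0}^{n} T̃_k / 2^{n−k}; equivalently, u_n = 2^{−n} + 2^{1−n} Σ_{k=1}^{n} T_k. -/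
open Polynomial

noncomputable def S18 (n : ℕ) : Polynomial ℝ :=
  ∑ k ∈ Finset.range n, Chebyshev.T ℝ ((k : ℤ) + 1)

noncomputable def w18 (n : ℕ) : Polynomial ℝ :=
  (C (1/2 : ℝ))^n * (1 + 2 * S18 n)

lemma S18_succ (n : ℕ) : S18 (n + 1) = S18 n + Chebyshev.T ℝ ((n : ℤ) + 1) := by
  simp [S18, Finset.sum_range_succ]

lemma half2 : (2 : Polynomial ℝ) * C (1/2 : ℝ) = 1 := by
  rw [show (2 : Polynomial ℝ) = C 2 from (map_ofNat C 2).symm, ← C_mul]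
  norm_num

lemma key18 : ∀ m : ℕ, X * (1 + 2 * S18 (m+1)) = S18 (m+2) + S18 m + 1 := by
  intro m
  induction m with
  | zero =>
      have h1 : S18 1 = X := by simp [S18, Chebyshev.T_one]
      have h2 : S18 2 = X + (2*X^2 - 1) := by
        have := S18_succ 1
        rw [this, h1]
        norm_num [Chebyshev.T_two]
      have h0 : S18 0 = 0 := by simp [S18]
      rw [h1, h2, h0]
      ring
  | succ m ih =>
      have e1 := S18_succ (m+1)
      have e2 := S18_succ (m+2)
      have e3 := S18_succ m
      have h := Polynomial.Chebyshev.T_add_two ℝ ((m : ℤ) + 1)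
      push_cast at e1 e2 e3 h ih ⊢
      rw [show ((m:ℤ)+2+1) = ((m:ℤ)+1+2) by ring] at e2
      linear_combination ih + 2*X*e1 - e2 - e3 - h

lemma w18_rec (m : ℕ) : w18 (m+2) = X * w18 (m+1) - C (1/4 : ℝ) * w18 m := by
  have hc : (C (1/4 : ℝ)) = (C (1/2 : ℝ))^2 := by
    rw [← C_pow]; norm_num
  have hk := key18 m
  simp only [w18, hc]
  linear_combination (-(C (1/2:ℝ))^(m+1)) * hk +
    ((C (1/2:ℝ))^(m+1) * (1 + S18 (m+2) + S18 m)) * half2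

/-- the monic orthogonal polynomials `u_n` with recurrence coefficients
`α_n = 1/4` (`n ≥ 1`), `β₀ = −1/2`, `β_n = 0` (`n ≥ 1`) are given by
`u_n = Σ_{k=0}^{n} T̃_k / 2^{n−k}`, where `T̃_k` are the monic Chebyshev polynomials
of the first kind. -/
theorem minus_one_polynomials_as_sum_of_monic_chebyshev
    (Tt : ℕ → Polynomial ℝ)
    (hTt0 : Tt 0 = 1)
    (hTt : ∀ k : ℕ, 1 ≤ k → Tt k = C ((2 : ℝ) ^ (1 - (k : ℤ))) * Chebyshev.T ℝ (k : ℤ))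
    (u : ℕ → Polynomial ℝ)
    (hu0 : u 0 = 1) (hu1 : u 1 = X + C (1 / 2))
    (hu : ∀ n : ℕ, 1 ≤ n → u (n + 1) = X * u n - C (1 / 4) * u (n - 1)) :
    ∀ n : ℕ, u n = ∑ k ∈ Finset.range (n + 1), (((2 : ℝ) ^ (n - k))⁻¹) • Tt k := by
  -- step A: RHS = w18 n
  have hA : ∀ n : ℕ, (∑ k ∈ Finset.range (n + 1), (((2 : ℝ) ^ (n - k))⁻¹) • Tt k) = w18 n := by
    intro n
    rw [Finset.sum_range_succ']
    have h0 : (((2:ℝ) ^ (n - 0))⁻¹) • Tt 0 = (C (1/2 : ℝ))^n := by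
      rw [hTt0, smul_eq_C_mul, mul_one, ← C_pow]
      congr 1
      rw [one_div, inv_pow, Nat.sub_zero]
    rw [h0]
    have hterm : ∀ k ∈ Finset.range n,
        (((2:ℝ) ^ (n - (k+1)))⁻¹) • Tt (k+1)
          = (C (1/2:ℝ))^n * (2 * Chebyshev.T ℝ ((k:ℤ)+1)) := by
      intro k hk
      rw [Finset.mem_range] at hk
      rw [hTt (k+1) (Nat.le_add_left 1 k), smul_eq_C_mul, ← mul_assoc, ← C_mul]
      have hcast : ((n - (k+1) : ℕ) : ℤ) = (n : ℤ) - (k+1) := by omega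
      have hsc : ((2:ℝ) ^ (n - (k+1) : ℕ))⁻¹ * (2:ℝ) ^ (1 - ((k+1:ℕ) : ℤ))
          = (1/2:ℝ)^n * 2 := by
        rw [← zpow_natCast (2:ℝ) (n - (k+1)), hcast, ← zpow_neg]
        rw [← zpow_add₀ (two_ne_zero)]
        rw [show (1/2:ℝ) = (2:ℝ)⁻¹ by norm_num, inv_pow, ← zpow_natCast (2:ℝ) n, ← zpow_neg]
        rw [show (-((n:ℤ) - ((k:ℤ)+1)) + (1 - ((k+1:ℕ):ℤ))) = -(n:ℤ) + 1 by push_cast; ring]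
        rw [zpow_add₀ (two_ne_zero)]
        norm_num
      rw [hsc, show ((k+1:ℕ):ℤ) = (k:ℤ)+1 by push_cast; ring, C_mul, C_pow]
      rw [map_ofNat C 2]
      ring
    rw [Finset.sum_congr rfl hterm]
    have expand : w18 n = (C (1/2:ℝ))^n
        + ∑ k ∈ Finset.range n, (C (1/2:ℝ))^n * (2 * Chebyshev.T ℝ ((k:ℤ)+1)) := by
      rw [w18, S18, mul_add, mul_one, Finset.mul_sum, Finset.mul_sum]
    rw [expand, add_comm]
  -- step B: u n = w18 n by two-step induction
  have hB : ∀ n : ℕ, u n = w18 n ∧ u (n+1) = w18 (n+1) := by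
    intro n
    induction n with
    | zero =>
        constructor
        · rw [hu0]; simp [w18, S18]
        · rw [hu1]
          have h1 : S18 1 = X := by simp [S18, Chebyshev.T_one]
          rw [w18, h1]
          linear_combination (-X) * half2
    | succ m ih =>
        refine ⟨ih.2, ?_⟩
        rw [hu (m+1) (Nat.le_add_left 1 m), w18_rec]
        simp only [Nat.add_sub_cancel]
        rw [ih.1, ih.2]
  intro n
  rw [hA, (hB n).1]
end
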